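/- Let E_a satisfy the n-th order Maxwell remnant equations on the unit hyperboloid (so that in particular D² E_a = (2-n²)E_a, D_a E^a = 0), and let α be an asymptotic translation. Then the scalar φ := E^m D_m α satisfies the n-th order Klein–Gordon remnant equation D² φ = (1-n²) φ. -/

import Mathlib

/-
Common extrinsic setup (used in all files).

We work in ℝ⁴ with the Minkowski inner product of signature (+,+,+,-) (CONTEXT 0).
`Hb` is the unit hyperboloid H = {x | ⟨x,x⟩ = 1}, `Ur` the open exterior region
{⟨x,x⟩ > 0} on which fields on H are represented (only their restriction to H matters,
since every intrinsic operator below first composes with the radial retraction `ret`,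
i.e. with the 0-homogeneous extension).

Standard facts about hypersurfaces give the following *definitions* of the intrinsic
(Levi-Civita) operators of the induced metric q on H in terms of ambient derivatives of
the 0-homogeneous extension:
 * the induced metric q at x ∈ H is the restriction of ⟨·,·⟩ to the tangent space
   {u | ⟨x,u⟩ = 0};
 * the intrinsic Hessian D_aD_b f on tangent vectors is the ambient Hessian of the
   0-homogeneous extension (the second-fundamental-form correction vanishes because the
   0-homogeneous extension has radial derivative 0);
 * the intrinsic gradient D^a f is the ambient Minkowski gradient of the 0-homogeneous
   extension (automatically tangent);
 * the intrinsic Laplacian D² f = q^{ab} D_aD_b f is the ambient wave operator applied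
   to the 0-homogeneous extension;
 * the intrinsic divergence D_a V^a of a tangent field is the ambient divergence of its
   0-homogeneous extension.
-/

noncomputable section

open scoped BigOperators

/-- ℝ⁴. -/
abbrev E4 : Type := Fin 4 → ℝ

/-- The signature (+,+,+,-). -/
def sg (i : Fin 4) : ℝ := if i = 3 then -1 else 1

/-- The Minkowski inner product ⟨x,y⟩ = x₀y₀ + x₁y₁ + x₂y₂ − x₃y₃. -/
def mk4 (x y : E4) : ℝ := ∑ i, sg i * x i * y i

/-- The unit hyperboloid H = {x | ⟨x,x⟩ = 1}. -/
def Hb : Set E4 := {x | mk4 x x = 1}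

/-- The exterior region {x | ⟨x,x⟩ > 0}. -/
def Ur : Set E4 := {x | 0 < mk4 x x}

/-- Radial retraction of the exterior region onto H. -/
def ret (x : E4) : E4 := (Real.sqrt (mk4 x x))⁻¹ • x

/-- 0-homogeneous extension of (the H-restriction of) a scalar field. -/
def Hz (f : E4 → ℝ) : E4 → ℝ := fun x => f (ret x)

/-- Standard basis of ℝ⁴. -/
def bas (i : Fin 4) : E4 := fun j => if j = i then 1 else 0

/-- Partial derivative ∂_i. -/
def pd (f : E4 → ℝ) (i : Fin 4) (x : E4) : ℝ := fderiv ℝ f x (bas i)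

/-- Ambient Minkowski gradient (index raised with the Minkowski metric). -/
def mgrad (f : E4 → ℝ) (x : E4) : E4 := fun i => sg i * pd f i x

/-- Intrinsic gradient D^a f on H. -/
def grH (f : E4 → ℝ) (x : E4) : E4 := mgrad (Hz f) x

/-- Ambient Minkowski wave operator □ = ∂² + ∂² + ∂² − ∂². -/
def boxm (f : E4 → ℝ) (x : E4) : ℝ := ∑ i, sg i * pd (pd f i) i x

/-- Intrinsic Laplacian D² f = q^{ab} D_a D_b f on H. -/
def D2H (f : E4 → ℝ) (x : E4) : ℝ := boxm (Hz f) x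

/-- 0-homogeneous extension of a vector field on H. -/
def HzV (V : E4 → E4) : E4 → E4 := fun x => V (ret x)

/-- Intrinsic divergence D_a V^a on H of a tangent vector field. -/
def divH (V : E4 → E4) (x : E4) : ℝ := ∑ i, fderiv ℝ (HzV V) x (bas i) i

/-- `u` is tangent to H at `x`. -/
def Tang (x u : E4) : Prop := mk4 x u = 0

/-- Intrinsic Hessian D_a D_b f on H, evaluated on (tangent) vectors u, v. -/
def HessH (f : E4 → ℝ) (x u v : E4) : ℝ :=
  fderiv ℝ (fun y => fderiv ℝ (Hz f) y v) x u

/-- The linear field α_k = ⟨k,·⟩; its restriction to H is an asymptotic translation. -/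
def trfn (k : E4) : E4 → ℝ := fun x => mk4 k x

/-- `f` (restricted to H) is an asymptotic translation: D_a D_b f + f q_ab = 0. -/
def IsATrans (f : E4 → ℝ) : Prop :=
  ContDiffOn ℝ (⊤ : ℕ∞) f Ur ∧
  ∀ x ∈ Hb, ∀ u v : E4, Tang x u → Tang x v →
    HessH f x u v + f x * mk4 u v = 0

/-- Projection onto the tangent space of the hyperboloid through x (components). -/
def Pml (x : E4) (a c : Fin 4) : ℝ :=
  (if a = c then (1 : ℝ) else 0) - x a * (sg c * x c) / mk4 x x

/-- Tangential projection of a vector. -/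
def Pgv (x u : E4) : E4 := fun a => ∑ c, Pml x a c * u c

/-- The alternating Levi-Civita symbol ε_{abcd} on ℝ⁴ (ε_{0123} = 1). -/
def ep (a b c d : Fin 4) : ℝ :=
  ∑ σ : Equiv.Perm (Fin 4),
    if a = σ 0 ∧ b = σ 1 ∧ c = σ 2 ∧ d = σ 3
      then ((Equiv.Perm.sign σ : ℤ) : ℝ) else 0

/-- Intrinsic covariant derivative D_u W of a tangent vector field on H
(Gauss formula: tangential projection of the ambient derivative of the
0-homogeneous extension). -/
def CDW (W : E4 → E4) (x u : E4) : E4 := Pgv x (fderiv ℝ (HzV W) x u)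

/-- Second intrinsic covariant derivative (D²W)(v,v). -/
def DDW (W : E4 → E4) (x v : E4) : E4 :=
  Pgv x (fderiv ℝ (fun y => CDW W y (Pgv y v)) x v)

/-- Intrinsic rough Laplacian D²W^a = q^{bc}D_bD_cW^a of a tangent vector field on H. -/
def LapV (W : E4 → E4) (x : E4) : E4 := ∑ i, sg i • DDW W x (Pgv x (bas i))

/-- Intrinsic curl (ε^{abc} D_b W_c) on H of a tangent vector field, via the induced
volume form ε_H = ι_x ε₄. -/
def curlH (W : E4 → E4) (x : E4) (a : Fin 4) : ℝ :=
  sg a * ∑ d, ∑ b, ∑ c,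
    x d * ep d a b c * sg b * fderiv ℝ (fun y => HzV W y c) x (bas b)

/-- 0-homogeneous extension of a 2-tensor field (contravariant components). -/
def HzT (T : E4 → Fin 4 → Fin 4 → ℝ) : E4 → Fin 4 → Fin 4 → ℝ := fun x => T (ret x)

/-- Intrinsic covariant derivative (D_u T)^{ab} of a tangent 2-tensor field on H. -/
def CDT (T : E4 → Fin 4 → Fin 4 → ℝ) (x u : E4) (a b : Fin 4) : ℝ :=
  ∑ c, ∑ d, Pml x a c * Pml x b d * fderiv ℝ (fun y => HzT T y c d) x u

/-- Second intrinsic covariant derivative (D²T)(v,v)^{ab}. -/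
def DDT (T : E4 → Fin 4 → Fin 4 → ℝ) (x v : E4) (a b : Fin 4) : ℝ :=
  ∑ c, ∑ d, Pml x a c * Pml x b d * fderiv ℝ (fun y => CDT T y (Pgv y v) c d) x v

/-- Intrinsic rough Laplacian D²T^{ab} = q^{cd}D_cD_dT^{ab} on H. -/
def LapT (T : E4 → Fin 4 → Fin 4 → ℝ) (x : E4) (a b : Fin 4) : ℝ :=
  ∑ i, sg i * DDT T x (Pgv x (bas i)) a b

/-- Intrinsic curl ε^{lma} D_l T_m{}^b on H of a tangent 2-tensor field. -/
def curlT (T : E4 → Fin 4 → Fin 4 → ℝ) (x : E4) (a b : Fin 4) : ℝ :=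
  sg a * ∑ e, ∑ l, ∑ m, ∑ c,
    x e * ep e l m a * sg l * Pml x b c * fderiv ℝ (fun y => HzT T y m c) x (bas l)

/-
STATEMENT 14: if E_a (with B_a) satisfies the n-th order Maxwell remnant equations on H
(including D_aE^a = 0), and α is an asymptotic translation (realized by k ∈ ℝ⁴ ≅ T),
then φ := E^m D_m α satisfies D²φ = (1−n²)φ.
-/

-- basic sg / mk4 / bas lemmas
@[simp] lemma sg0 : sg 0 = 1 := rfl
@[simp] lemma sg1 : sg 1 = 1 := rfl
@[simp] lemma sg2 : sg 2 = 1 := rfl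
@[simp] lemma sg3 : sg 3 = -1 := rfl

lemma mk4_expand (x y : E4) :
    mk4 x y = x 0 * y 0 + x 1 * y 1 + x 2 * y 2 - x 3 * y 3 := by
  simp [mk4, Fin.sum_univ_four]; ring

lemma mk4_smul_left (c : ℝ) (x y : E4) : mk4 (c • x) y = c * mk4 x y := by
  simp [mk4_expand]; ring

lemma mk4_smul_right (c : ℝ) (x y : E4) : mk4 x (c • y) = c * mk4 x y := by
  simp [mk4_expand]; ring

lemma continuous_mk4_self : Continuous (fun y : E4 => mk4 y y) := by
  simp only [mk4_expand]; fun_prop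

lemma isOpen_Ur : IsOpen Ur := by
  have : Ur = (fun y : E4 => mk4 y y) ⁻¹' (Set.Ioi 0) := rfl
  rw [this]
  exact isOpen_Ioi.preimage continuous_mk4_self

lemma Ur_mem_nhds {x : E4} (hx : x ∈ Ur) : Ur ∈ nhds x :=
  isOpen_Ur.mem_nhds hx

lemma Hb_subset_Ur : Hb ⊆ Ur := by
  intro x hx
  simp only [Hb, Set.mem_setOf_eq] at hx
  simp [Ur, Set.mem_setOf_eq, hx]

lemma mk4_pos {x : E4} (hx : x ∈ Ur) : 0 < mk4 x x := hx

lemma sqrt_mk4_pos {x : E4} (hx : x ∈ Ur) : 0 < Real.sqrt (mk4 x x) :=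
  Real.sqrt_pos.2 hx

lemma ret_eq_self {x : E4} (hx : x ∈ Hb) : ret x = x := by
  have : mk4 x x = 1 := hx
  simp [ret, this]

lemma ret_mem_Hb {x : E4} (hx : x ∈ Ur) : ret x ∈ Hb := by
  have h0 : 0 < mk4 x x := hx
  show mk4 _ _ = 1
  rw [ret, mk4_smul_left, mk4_smul_right]
  have hs : Real.sqrt (mk4 x x) * Real.sqrt (mk4 x x) = mk4 x x :=
    Real.mul_self_sqrt h0.le
  have hpos := Real.sqrt_pos.2 h0
  rw [← hs]
  field_simp
  rw [Real.sqrt_sq hpos.le]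

lemma smul_mem_Ur {c : ℝ} (hc : 0 < c) {x : E4} (hx : x ∈ Ur) : c • x ∈ Ur := by
  have : mk4 (c • x) (c • x) = c * (c * mk4 x x) := by
    rw [mk4_smul_left, mk4_smul_right]
  show 0 < mk4 _ _
  rw [this]
  exact mul_pos hc (mul_pos hc hx)

lemma ret_smul {c : ℝ} (hc : 0 < c) {x : E4} (hx : x ∈ Ur) : ret (c • x) = ret x := by
  have h0 : 0 < mk4 x x := hx
  have : mk4 (c • x) (c • x) = c ^ 2 * mk4 x x := by
    rw [mk4_smul_left, mk4_smul_right]; ring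
  rw [ret, this, Real.sqrt_mul (by positivity), Real.sqrt_sq hc.le, ret, smul_smul,
    mul_inv]
  congr 1
  field_simp

lemma self_eq_sqrt_smul_ret {x : E4} (hx : x ∈ Ur) :
    x = Real.sqrt (mk4 x x) • ret x := by
  rw [ret, smul_smul, mul_inv_cancel₀ (sqrt_mk4_pos hx).ne', one_smul]

lemma contDiffOn_ret : ContDiffOn ℝ (⊤ : ℕ∞) ret Ur := by
  have hq : ContDiff ℝ (⊤ : ℕ∞) (fun y : E4 => mk4 y y) := by
    simp only [mk4_expand]
    fun_prop
  have hinv : ContDiffOn ℝ (⊤ : ℕ∞) (fun y : E4 => (Real.sqrt (mk4 y y))⁻¹) Ur := by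
    intro y hy
    apply ContDiffWithinAt.inv
    · have h1 : ContDiffAt ℝ (⊤ : ℕ∞) Real.sqrt (mk4 y y) := Real.contDiffAt_sqrt (mk4_pos hy).ne'
      have h2 : ContDiffAt ℝ (⊤ : ℕ∞) (fun z : E4 => mk4 z z) y := hq.contDiffAt
      exact (ContDiffAt.comp (g := Real.sqrt) (f := fun z : E4 => mk4 z z) y h1 h2).contDiffWithinAt
    · exact (sqrt_mk4_pos hy).ne'
  exact hinv.smul contDiffOn_id

@[simp] lemma bas00 : (bas 0) 0 = 1 := by simp only [bas]; simp
@[simp] lemma bas01 : (bas 0) 1 = 0 := by simp only [bas]; rw [if_neg (by decide)]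
@[simp] lemma bas02 : (bas 0) 2 = 0 := by simp only [bas]; rw [if_neg (by decide)]
@[simp] lemma bas03 : (bas 0) 3 = 0 := by simp only [bas]; rw [if_neg (by decide)]
@[simp] lemma bas10 : (bas 1) 0 = 0 := by simp only [bas]; rw [if_neg (by decide)]
@[simp] lemma bas11 : (bas 1) 1 = 1 := by simp only [bas]; simp
@[simp] lemma bas12 : (bas 1) 2 = 0 := by simp only [bas]; rw [if_neg (by decide)]
@[simp] lemma bas13 : (bas 1) 3 = 0 := by simp only [bas]; rw [if_neg (by decide)]
@[simp] lemma bas20 : (bas 2) 0 = 0 := by simp only [bas]; rw [if_neg (by decide)]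
@[simp] lemma bas21 : (bas 2) 1 = 0 := by simp only [bas]; rw [if_neg (by decide)]
@[simp] lemma bas22 : (bas 2) 2 = 1 := by simp only [bas]; simp
@[simp] lemma bas23 : (bas 2) 3 = 0 := by simp only [bas]; rw [if_neg (by decide)]
@[simp] lemma bas30 : (bas 3) 0 = 0 := by simp only [bas]; rw [if_neg (by decide)]
@[simp] lemma bas31 : (bas 3) 1 = 0 := by simp only [bas]; rw [if_neg (by decide)]
@[simp] lemma bas32 : (bas 3) 2 = 0 := by simp only [bas]; rw [if_neg (by decide)]
@[simp] lemma bas33 : (bas 3) 3 = 1 := by simp only [bas]; simp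

def epz (a b c d : Fin 4) : ℤ :=
  ∑ σ : Equiv.Perm (Fin 4), if a = σ 0 ∧ b = σ 1 ∧ c = σ 2 ∧ d = σ 3
      then ((Equiv.Perm.sign σ : ℤ)) else 0

lemma ep_cast (a b c d : Fin 4) : ep a b c d = ((epz a b c d : ℤ) : ℝ) := by
  unfold ep epz
  push_cast [apply_ite (fun (z : ℤ) => (z : ℝ))]
  rfl

-- ε symbol values
@[simp] lemma ep_0000 : ep 0 0 0 0 = 0 := by rw [ep_cast]; norm_num [show epz 0 0 0 0 = 0 from by decide]
@[simp] lemma ep_0001 : ep 0 0 0 1 = 0 := by rw [ep_cast]; norm_num [show epz 0 0 0 1 = 0 from by decide]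
@[simp] lemma ep_0002 : ep 0 0 0 2 = 0 := by rw [ep_cast]; norm_num [show epz 0 0 0 2 = 0 from by decide]
@[simp] lemma ep_0003 : ep 0 0 0 3 = 0 := by rw [ep_cast]; norm_num [show epz 0 0 0 3 = 0 from by decide]
@[simp] lemma ep_0010 : ep 0 0 1 0 = 0 := by rw [ep_cast]; norm_num [show epz 0 0 1 0 = 0 from by decide]
@[simp] lemma ep_0011 : ep 0 0 1 1 = 0 := by rw [ep_cast]; norm_num [show epz 0 0 1 1 = 0 from by decide]
@[simp] lemma ep_0012 : ep 0 0 1 2 = 0 := by rw [ep_cast]; norm_num [show epz 0 0 1 2 = 0 from by decide]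
@[simp] lemma ep_0013 : ep 0 0 1 3 = 0 := by rw [ep_cast]; norm_num [show epz 0 0 1 3 = 0 from by decide]
@[simp] lemma ep_0020 : ep 0 0 2 0 = 0 := by rw [ep_cast]; norm_num [show epz 0 0 2 0 = 0 from by decide]
@[simp] lemma ep_0021 : ep 0 0 2 1 = 0 := by rw [ep_cast]; norm_num [show epz 0 0 2 1 = 0 from by decide]
@[simp] lemma ep_0022 : ep 0 0 2 2 = 0 := by rw [ep_cast]; norm_num [show epz 0 0 2 2 = 0 from by decide]
@[simp] lemma ep_0023 : ep 0 0 2 3 = 0 := by rw [ep_cast]; norm_num [show epz 0 0 2 3 = 0 from by decide]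
@[simp] lemma ep_0030 : ep 0 0 3 0 = 0 := by rw [ep_cast]; norm_num [show epz 0 0 3 0 = 0 from by decide]
@[simp] lemma ep_0031 : ep 0 0 3 1 = 0 := by rw [ep_cast]; norm_num [show epz 0 0 3 1 = 0 from by decide]
@[simp] lemma ep_0032 : ep 0 0 3 2 = 0 := by rw [ep_cast]; norm_num [show epz 0 0 3 2 = 0 from by decide]
@[simp] lemma ep_0033 : ep 0 0 3 3 = 0 := by rw [ep_cast]; norm_num [show epz 0 0 3 3 = 0 from by decide]
@[simp] lemma ep_0100 : ep 0 1 0 0 = 0 := by rw [ep_cast]; norm_num [show epz 0 1 0 0 = 0 from by decide]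
@[simp] lemma ep_0101 : ep 0 1 0 1 = 0 := by rw [ep_cast]; norm_num [show epz 0 1 0 1 = 0 from by decide]
@[simp] lemma ep_0102 : ep 0 1 0 2 = 0 := by rw [ep_cast]; norm_num [show epz 0 1 0 2 = 0 from by decide]
@[simp] lemma ep_0103 : ep 0 1 0 3 = 0 := by rw [ep_cast]; norm_num [show epz 0 1 0 3 = 0 from by decide]
@[simp] lemma ep_0110 : ep 0 1 1 0 = 0 := by rw [ep_cast]; norm_num [show epz 0 1 1 0 = 0 from by decide]
@[simp] lemma ep_0111 : ep 0 1 1 1 = 0 := by rw [ep_cast]; norm_num [show epz 0 1 1 1 = 0 from by decide]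
@[simp] lemma ep_0112 : ep 0 1 1 2 = 0 := by rw [ep_cast]; norm_num [show epz 0 1 1 2 = 0 from by decide]
@[simp] lemma ep_0113 : ep 0 1 1 3 = 0 := by rw [ep_cast]; norm_num [show epz 0 1 1 3 = 0 from by decide]
@[simp] lemma ep_0120 : ep 0 1 2 0 = 0 := by rw [ep_cast]; norm_num [show epz 0 1 2 0 = 0 from by decide]
@[simp] lemma ep_0121 : ep 0 1 2 1 = 0 := by rw [ep_cast]; norm_num [show epz 0 1 2 1 = 0 from by decide]
@[simp] lemma ep_0122 : ep 0 1 2 2 = 0 := by rw [ep_cast]; norm_num [show epz 0 1 2 2 = 0 from by decide]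
@[simp] lemma ep_0123 : ep 0 1 2 3 = 1 := by rw [ep_cast]; norm_num [show epz 0 1 2 3 = 1 from by decide]
@[simp] lemma ep_0130 : ep 0 1 3 0 = 0 := by rw [ep_cast]; norm_num [show epz 0 1 3 0 = 0 from by decide]
@[simp] lemma ep_0131 : ep 0 1 3 1 = 0 := by rw [ep_cast]; norm_num [show epz 0 1 3 1 = 0 from by decide]
@[simp] lemma ep_0132 : ep 0 1 3 2 = -1 := by rw [ep_cast]; norm_num [show epz 0 1 3 2 = -1 from by decide]
@[simp] lemma ep_0133 : ep 0 1 3 3 = 0 := by rw [ep_cast]; norm_num [show epz 0 1 3 3 = 0 from by decide]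
@[simp] lemma ep_0200 : ep 0 2 0 0 = 0 := by rw [ep_cast]; norm_num [show epz 0 2 0 0 = 0 from by decide]
@[simp] lemma ep_0201 : ep 0 2 0 1 = 0 := by rw [ep_cast]; norm_num [show epz 0 2 0 1 = 0 from by decide]
@[simp] lemma ep_0202 : ep 0 2 0 2 = 0 := by rw [ep_cast]; norm_num [show epz 0 2 0 2 = 0 from by decide]
@[simp] lemma ep_0203 : ep 0 2 0 3 = 0 := by rw [ep_cast]; norm_num [show epz 0 2 0 3 = 0 from by decide]
@[simp] lemma ep_0210 : ep 0 2 1 0 = 0 := by rw [ep_cast]; norm_num [show epz 0 2 1 0 = 0 from by decide]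
@[simp] lemma ep_0211 : ep 0 2 1 1 = 0 := by rw [ep_cast]; norm_num [show epz 0 2 1 1 = 0 from by decide]
@[simp] lemma ep_0212 : ep 0 2 1 2 = 0 := by rw [ep_cast]; norm_num [show epz 0 2 1 2 = 0 from by decide]
@[simp] lemma ep_0213 : ep 0 2 1 3 = -1 := by rw [ep_cast]; norm_num [show epz 0 2 1 3 = -1 from by decide]
@[simp] lemma ep_0220 : ep 0 2 2 0 = 0 := by rw [ep_cast]; norm_num [show epz 0 2 2 0 = 0 from by decide]
@[simp] lemma ep_0221 : ep 0 2 2 1 = 0 := by rw [ep_cast]; norm_num [show epz 0 2 2 1 = 0 from by decide]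
@[simp] lemma ep_0222 : ep 0 2 2 2 = 0 := by rw [ep_cast]; norm_num [show epz 0 2 2 2 = 0 from by decide]
@[simp] lemma ep_0223 : ep 0 2 2 3 = 0 := by rw [ep_cast]; norm_num [show epz 0 2 2 3 = 0 from by decide]
@[simp] lemma ep_0230 : ep 0 2 3 0 = 0 := by rw [ep_cast]; norm_num [show epz 0 2 3 0 = 0 from by decide]
@[simp] lemma ep_0231 : ep 0 2 3 1 = 1 := by rw [ep_cast]; norm_num [show epz 0 2 3 1 = 1 from by decide]
@[simp] lemma ep_0232 : ep 0 2 3 2 = 0 := by rw [ep_cast]; norm_num [show epz 0 2 3 2 = 0 from by decide]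
@[simp] lemma ep_0233 : ep 0 2 3 3 = 0 := by rw [ep_cast]; norm_num [show epz 0 2 3 3 = 0 from by decide]
@[simp] lemma ep_0300 : ep 0 3 0 0 = 0 := by rw [ep_cast]; norm_num [show epz 0 3 0 0 = 0 from by decide]
@[simp] lemma ep_0301 : ep 0 3 0 1 = 0 := by rw [ep_cast]; norm_num [show epz 0 3 0 1 = 0 from by decide]
@[simp] lemma ep_0302 : ep 0 3 0 2 = 0 := by rw [ep_cast]; norm_num [show epz 0 3 0 2 = 0 from by decide]
@[simp] lemma ep_0303 : ep 0 3 0 3 = 0 := by rw [ep_cast]; norm_num [show epz 0 3 0 3 = 0 from by decide]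
@[simp] lemma ep_0310 : ep 0 3 1 0 = 0 := by rw [ep_cast]; norm_num [show epz 0 3 1 0 = 0 from by decide]
@[simp] lemma ep_0311 : ep 0 3 1 1 = 0 := by rw [ep_cast]; norm_num [show epz 0 3 1 1 = 0 from by decide]
@[simp] lemma ep_0312 : ep 0 3 1 2 = 1 := by rw [ep_cast]; norm_num [show epz 0 3 1 2 = 1 from by decide]
@[simp] lemma ep_0313 : ep 0 3 1 3 = 0 := by rw [ep_cast]; norm_num [show epz 0 3 1 3 = 0 from by decide]
@[simp] lemma ep_0320 : ep 0 3 2 0 = 0 := by rw [ep_cast]; norm_num [show epz 0 3 2 0 = 0 from by decide]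
@[simp] lemma ep_0321 : ep 0 3 2 1 = -1 := by rw [ep_cast]; norm_num [show epz 0 3 2 1 = -1 from by decide]
@[simp] lemma ep_0322 : ep 0 3 2 2 = 0 := by rw [ep_cast]; norm_num [show epz 0 3 2 2 = 0 from by decide]
@[simp] lemma ep_0323 : ep 0 3 2 3 = 0 := by rw [ep_cast]; norm_num [show epz 0 3 2 3 = 0 from by decide]
@[simp] lemma ep_0330 : ep 0 3 3 0 = 0 := by rw [ep_cast]; norm_num [show epz 0 3 3 0 = 0 from by decide]
@[simp] lemma ep_0331 : ep 0 3 3 1 = 0 := by rw [ep_cast]; norm_num [show epz 0 3 3 1 = 0 from by decide]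
@[simp] lemma ep_0332 : ep 0 3 3 2 = 0 := by rw [ep_cast]; norm_num [show epz 0 3 3 2 = 0 from by decide]
@[simp] lemma ep_0333 : ep 0 3 3 3 = 0 := by rw [ep_cast]; norm_num [show epz 0 3 3 3 = 0 from by decide]
@[simp] lemma ep_1000 : ep 1 0 0 0 = 0 := by rw [ep_cast]; norm_num [show epz 1 0 0 0 = 0 from by decide]
@[simp] lemma ep_1001 : ep 1 0 0 1 = 0 := by rw [ep_cast]; norm_num [show epz 1 0 0 1 = 0 from by decide]
@[simp] lemma ep_1002 : ep 1 0 0 2 = 0 := by rw [ep_cast]; norm_num [show epz 1 0 0 2 = 0 from by decide]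
@[simp] lemma ep_1003 : ep 1 0 0 3 = 0 := by rw [ep_cast]; norm_num [show epz 1 0 0 3 = 0 from by decide]
@[simp] lemma ep_1010 : ep 1 0 1 0 = 0 := by rw [ep_cast]; norm_num [show epz 1 0 1 0 = 0 from by decide]
@[simp] lemma ep_1011 : ep 1 0 1 1 = 0 := by rw [ep_cast]; norm_num [show epz 1 0 1 1 = 0 from by decide]
@[simp] lemma ep_1012 : ep 1 0 1 2 = 0 := by rw [ep_cast]; norm_num [show epz 1 0 1 2 = 0 from by decide]
@[simp] lemma ep_1013 : ep 1 0 1 3 = 0 := by rw [ep_cast]; norm_num [show epz 1 0 1 3 = 0 from by decide]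
@[simp] lemma ep_1020 : ep 1 0 2 0 = 0 := by rw [ep_cast]; norm_num [show epz 1 0 2 0 = 0 from by decide]
@[simp] lemma ep_1021 : ep 1 0 2 1 = 0 := by rw [ep_cast]; norm_num [show epz 1 0 2 1 = 0 from by decide]
@[simp] lemma ep_1022 : ep 1 0 2 2 = 0 := by rw [ep_cast]; norm_num [show epz 1 0 2 2 = 0 from by decide]
@[simp] lemma ep_1023 : ep 1 0 2 3 = -1 := by rw [ep_cast]; norm_num [show epz 1 0 2 3 = -1 from by decide]
@[simp] lemma ep_1030 : ep 1 0 3 0 = 0 := by rw [ep_cast]; norm_num [show epz 1 0 3 0 = 0 from by decide]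
@[simp] lemma ep_1031 : ep 1 0 3 1 = 0 := by rw [ep_cast]; norm_num [show epz 1 0 3 1 = 0 from by decide]
@[simp] lemma ep_1032 : ep 1 0 3 2 = 1 := by rw [ep_cast]; norm_num [show epz 1 0 3 2 = 1 from by decide]
@[simp] lemma ep_1033 : ep 1 0 3 3 = 0 := by rw [ep_cast]; norm_num [show epz 1 0 3 3 = 0 from by decide]
@[simp] lemma ep_1100 : ep 1 1 0 0 = 0 := by rw [ep_cast]; norm_num [show epz 1 1 0 0 = 0 from by decide]
@[simp] lemma ep_1101 : ep 1 1 0 1 = 0 := by rw [ep_cast]; norm_num [show epz 1 1 0 1 = 0 from by decide]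
@[simp] lemma ep_1102 : ep 1 1 0 2 = 0 := by rw [ep_cast]; norm_num [show epz 1 1 0 2 = 0 from by decide]
@[simp] lemma ep_1103 : ep 1 1 0 3 = 0 := by rw [ep_cast]; norm_num [show epz 1 1 0 3 = 0 from by decide]
@[simp] lemma ep_1110 : ep 1 1 1 0 = 0 := by rw [ep_cast]; norm_num [show epz 1 1 1 0 = 0 from by decide]
@[simp] lemma ep_1111 : ep 1 1 1 1 = 0 := by rw [ep_cast]; norm_num [show epz 1 1 1 1 = 0 from by decide]
@[simp] lemma ep_1112 : ep 1 1 1 2 = 0 := by rw [ep_cast]; norm_num [show epz 1 1 1 2 = 0 from by decide]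
@[simp] lemma ep_1113 : ep 1 1 1 3 = 0 := by rw [ep_cast]; norm_num [show epz 1 1 1 3 = 0 from by decide]
@[simp] lemma ep_1120 : ep 1 1 2 0 = 0 := by rw [ep_cast]; norm_num [show epz 1 1 2 0 = 0 from by decide]
@[simp] lemma ep_1121 : ep 1 1 2 1 = 0 := by rw [ep_cast]; norm_num [show epz 1 1 2 1 = 0 from by decide]
@[simp] lemma ep_1122 : ep 1 1 2 2 = 0 := by rw [ep_cast]; norm_num [show epz 1 1 2 2 = 0 from by decide]
@[simp] lemma ep_1123 : ep 1 1 2 3 = 0 := by rw [ep_cast]; norm_num [show epz 1 1 2 3 = 0 from by decide]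
@[simp] lemma ep_1130 : ep 1 1 3 0 = 0 := by rw [ep_cast]; norm_num [show epz 1 1 3 0 = 0 from by decide]
@[simp] lemma ep_1131 : ep 1 1 3 1 = 0 := by rw [ep_cast]; norm_num [show epz 1 1 3 1 = 0 from by decide]
@[simp] lemma ep_1132 : ep 1 1 3 2 = 0 := by rw [ep_cast]; norm_num [show epz 1 1 3 2 = 0 from by decide]
@[simp] lemma ep_1133 : ep 1 1 3 3 = 0 := by rw [ep_cast]; norm_num [show epz 1 1 3 3 = 0 from by decide]
@[simp] lemma ep_1200 : ep 1 2 0 0 = 0 := by rw [ep_cast]; norm_num [show epz 1 2 0 0 = 0 from by decide]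
@[simp] lemma ep_1201 : ep 1 2 0 1 = 0 := by rw [ep_cast]; norm_num [show epz 1 2 0 1 = 0 from by decide]
@[simp] lemma ep_1202 : ep 1 2 0 2 = 0 := by rw [ep_cast]; norm_num [show epz 1 2 0 2 = 0 from by decide]
@[simp] lemma ep_1203 : ep 1 2 0 3 = 1 := by rw [ep_cast]; norm_num [show epz 1 2 0 3 = 1 from by decide]
@[simp] lemma ep_1210 : ep 1 2 1 0 = 0 := by rw [ep_cast]; norm_num [show epz 1 2 1 0 = 0 from by decide]
@[simp] lemma ep_1211 : ep 1 2 1 1 = 0 := by rw [ep_cast]; norm_num [show epz 1 2 1 1 = 0 from by decide]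
@[simp] lemma ep_1212 : ep 1 2 1 2 = 0 := by rw [ep_cast]; norm_num [show epz 1 2 1 2 = 0 from by decide]
@[simp] lemma ep_1213 : ep 1 2 1 3 = 0 := by rw [ep_cast]; norm_num [show epz 1 2 1 3 = 0 from by decide]
@[simp] lemma ep_1220 : ep 1 2 2 0 = 0 := by rw [ep_cast]; norm_num [show epz 1 2 2 0 = 0 from by decide]
@[simp] lemma ep_1221 : ep 1 2 2 1 = 0 := by rw [ep_cast]; norm_num [show epz 1 2 2 1 = 0 from by decide]
@[simp] lemma ep_1222 : ep 1 2 2 2 = 0 := by rw [ep_cast]; norm_num [show epz 1 2 2 2 = 0 from by decide]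
@[simp] lemma ep_1223 : ep 1 2 2 3 = 0 := by rw [ep_cast]; norm_num [show epz 1 2 2 3 = 0 from by decide]
@[simp] lemma ep_1230 : ep 1 2 3 0 = -1 := by rw [ep_cast]; norm_num [show epz 1 2 3 0 = -1 from by decide]
@[simp] lemma ep_1231 : ep 1 2 3 1 = 0 := by rw [ep_cast]; norm_num [show epz 1 2 3 1 = 0 from by decide]
@[simp] lemma ep_1232 : ep 1 2 3 2 = 0 := by rw [ep_cast]; norm_num [show epz 1 2 3 2 = 0 from by decide]
@[simp] lemma ep_1233 : ep 1 2 3 3 = 0 := by rw [ep_cast]; norm_num [show epz 1 2 3 3 = 0 from by decide]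
@[simp] lemma ep_1300 : ep 1 3 0 0 = 0 := by rw [ep_cast]; norm_num [show epz 1 3 0 0 = 0 from by decide]
@[simp] lemma ep_1301 : ep 1 3 0 1 = 0 := by rw [ep_cast]; norm_num [show epz 1 3 0 1 = 0 from by decide]
@[simp] lemma ep_1302 : ep 1 3 0 2 = -1 := by rw [ep_cast]; norm_num [show epz 1 3 0 2 = -1 from by decide]
@[simp] lemma ep_1303 : ep 1 3 0 3 = 0 := by rw [ep_cast]; norm_num [show epz 1 3 0 3 = 0 from by decide]
@[simp] lemma ep_1310 : ep 1 3 1 0 = 0 := by rw [ep_cast]; norm_num [show epz 1 3 1 0 = 0 from by decide]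
@[simp] lemma ep_1311 : ep 1 3 1 1 = 0 := by rw [ep_cast]; norm_num [show epz 1 3 1 1 = 0 from by decide]
@[simp] lemma ep_1312 : ep 1 3 1 2 = 0 := by rw [ep_cast]; norm_num [show epz 1 3 1 2 = 0 from by decide]
@[simp] lemma ep_1313 : ep 1 3 1 3 = 0 := by rw [ep_cast]; norm_num [show epz 1 3 1 3 = 0 from by decide]
@[simp] lemma ep_1320 : ep 1 3 2 0 = 1 := by rw [ep_cast]; norm_num [show epz 1 3 2 0 = 1 from by decide]
@[simp] lemma ep_1321 : ep 1 3 2 1 = 0 := by rw [ep_cast]; norm_num [show epz 1 3 2 1 = 0 from by decide]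
@[simp] lemma ep_1322 : ep 1 3 2 2 = 0 := by rw [ep_cast]; norm_num [show epz 1 3 2 2 = 0 from by decide]
@[simp] lemma ep_1323 : ep 1 3 2 3 = 0 := by rw [ep_cast]; norm_num [show epz 1 3 2 3 = 0 from by decide]
@[simp] lemma ep_1330 : ep 1 3 3 0 = 0 := by rw [ep_cast]; norm_num [show epz 1 3 3 0 = 0 from by decide]
@[simp] lemma ep_1331 : ep 1 3 3 1 = 0 := by rw [ep_cast]; norm_num [show epz 1 3 3 1 = 0 from by decide]
@[simp] lemma ep_1332 : ep 1 3 3 2 = 0 := by rw [ep_cast]; norm_num [show epz 1 3 3 2 = 0 from by decide]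
@[simp] lemma ep_1333 : ep 1 3 3 3 = 0 := by rw [ep_cast]; norm_num [show epz 1 3 3 3 = 0 from by decide]
@[simp] lemma ep_2000 : ep 2 0 0 0 = 0 := by rw [ep_cast]; norm_num [show epz 2 0 0 0 = 0 from by decide]
@[simp] lemma ep_2001 : ep 2 0 0 1 = 0 := by rw [ep_cast]; norm_num [show epz 2 0 0 1 = 0 from by decide]
@[simp] lemma ep_2002 : ep 2 0 0 2 = 0 := by rw [ep_cast]; norm_num [show epz 2 0 0 2 = 0 from by decide]
@[simp] lemma ep_2003 : ep 2 0 0 3 = 0 := by rw [ep_cast]; norm_num [show epz 2 0 0 3 = 0 from by decide]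
@[simp] lemma ep_2010 : ep 2 0 1 0 = 0 := by rw [ep_cast]; norm_num [show epz 2 0 1 0 = 0 from by decide]
@[simp] lemma ep_2011 : ep 2 0 1 1 = 0 := by rw [ep_cast]; norm_num [show epz 2 0 1 1 = 0 from by decide]
@[simp] lemma ep_2012 : ep 2 0 1 2 = 0 := by rw [ep_cast]; norm_num [show epz 2 0 1 2 = 0 from by decide]
@[simp] lemma ep_2013 : ep 2 0 1 3 = 1 := by rw [ep_cast]; norm_num [show epz 2 0 1 3 = 1 from by decide]
@[simp] lemma ep_2020 : ep 2 0 2 0 = 0 := by rw [ep_cast]; norm_num [show epz 2 0 2 0 = 0 from by decide]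
@[simp] lemma ep_2021 : ep 2 0 2 1 = 0 := by rw [ep_cast]; norm_num [show epz 2 0 2 1 = 0 from by decide]
@[simp] lemma ep_2022 : ep 2 0 2 2 = 0 := by rw [ep_cast]; norm_num [show epz 2 0 2 2 = 0 from by decide]
@[simp] lemma ep_2023 : ep 2 0 2 3 = 0 := by rw [ep_cast]; norm_num [show epz 2 0 2 3 = 0 from by decide]
@[simp] lemma ep_2030 : ep 2 0 3 0 = 0 := by rw [ep_cast]; norm_num [show epz 2 0 3 0 = 0 from by decide]
@[simp] lemma ep_2031 : ep 2 0 3 1 = -1 := by rw [ep_cast]; norm_num [show epz 2 0 3 1 = -1 from by decide]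
@[simp] lemma ep_2032 : ep 2 0 3 2 = 0 := by rw [ep_cast]; norm_num [show epz 2 0 3 2 = 0 from by decide]
@[simp] lemma ep_2033 : ep 2 0 3 3 = 0 := by rw [ep_cast]; norm_num [show epz 2 0 3 3 = 0 from by decide]
@[simp] lemma ep_2100 : ep 2 1 0 0 = 0 := by rw [ep_cast]; norm_num [show epz 2 1 0 0 = 0 from by decide]
@[simp] lemma ep_2101 : ep 2 1 0 1 = 0 := by rw [ep_cast]; norm_num [show epz 2 1 0 1 = 0 from by decide]
@[simp] lemma ep_2102 : ep 2 1 0 2 = 0 := by rw [ep_cast]; norm_num [show epz 2 1 0 2 = 0 from by decide]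
@[simp] lemma ep_2103 : ep 2 1 0 3 = -1 := by rw [ep_cast]; norm_num [show epz 2 1 0 3 = -1 from by decide]
@[simp] lemma ep_2110 : ep 2 1 1 0 = 0 := by rw [ep_cast]; norm_num [show epz 2 1 1 0 = 0 from by decide]
@[simp] lemma ep_2111 : ep 2 1 1 1 = 0 := by rw [ep_cast]; norm_num [show epz 2 1 1 1 = 0 from by decide]
@[simp] lemma ep_2112 : ep 2 1 1 2 = 0 := by rw [ep_cast]; norm_num [show epz 2 1 1 2 = 0 from by decide]
@[simp] lemma ep_2113 : ep 2 1 1 3 = 0 := by rw [ep_cast]; norm_num [show epz 2 1 1 3 = 0 from by decide]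
@[simp] lemma ep_2120 : ep 2 1 2 0 = 0 := by rw [ep_cast]; norm_num [show epz 2 1 2 0 = 0 from by decide]
@[simp] lemma ep_2121 : ep 2 1 2 1 = 0 := by rw [ep_cast]; norm_num [show epz 2 1 2 1 = 0 from by decide]
@[simp] lemma ep_2122 : ep 2 1 2 2 = 0 := by rw [ep_cast]; norm_num [show epz 2 1 2 2 = 0 from by decide]
@[simp] lemma ep_2123 : ep 2 1 2 3 = 0 := by rw [ep_cast]; norm_num [show epz 2 1 2 3 = 0 from by decide]
@[simp] lemma ep_2130 : ep 2 1 3 0 = 1 := by rw [ep_cast]; norm_num [show epz 2 1 3 0 = 1 from by decide]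
@[simp] lemma ep_2131 : ep 2 1 3 1 = 0 := by rw [ep_cast]; norm_num [show epz 2 1 3 1 = 0 from by decide]
@[simp] lemma ep_2132 : ep 2 1 3 2 = 0 := by rw [ep_cast]; norm_num [show epz 2 1 3 2 = 0 from by decide]
@[simp] lemma ep_2133 : ep 2 1 3 3 = 0 := by rw [ep_cast]; norm_num [show epz 2 1 3 3 = 0 from by decide]
@[simp] lemma ep_2200 : ep 2 2 0 0 = 0 := by rw [ep_cast]; norm_num [show epz 2 2 0 0 = 0 from by decide]
@[simp] lemma ep_2201 : ep 2 2 0 1 = 0 := by rw [ep_cast]; norm_num [show epz 2 2 0 1 = 0 from by decide]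
@[simp] lemma ep_2202 : ep 2 2 0 2 = 0 := by rw [ep_cast]; norm_num [show epz 2 2 0 2 = 0 from by decide]
@[simp] lemma ep_2203 : ep 2 2 0 3 = 0 := by rw [ep_cast]; norm_num [show epz 2 2 0 3 = 0 from by decide]
@[simp] lemma ep_2210 : ep 2 2 1 0 = 0 := by rw [ep_cast]; norm_num [show epz 2 2 1 0 = 0 from by decide]
@[simp] lemma ep_2211 : ep 2 2 1 1 = 0 := by rw [ep_cast]; norm_num [show epz 2 2 1 1 = 0 from by decide]
@[simp] lemma ep_2212 : ep 2 2 1 2 = 0 := by rw [ep_cast]; norm_num [show epz 2 2 1 2 = 0 from by decide]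
@[simp] lemma ep_2213 : ep 2 2 1 3 = 0 := by rw [ep_cast]; norm_num [show epz 2 2 1 3 = 0 from by decide]
@[simp] lemma ep_2220 : ep 2 2 2 0 = 0 := by rw [ep_cast]; norm_num [show epz 2 2 2 0 = 0 from by decide]
@[simp] lemma ep_2221 : ep 2 2 2 1 = 0 := by rw [ep_cast]; norm_num [show epz 2 2 2 1 = 0 from by decide]
@[simp] lemma ep_2222 : ep 2 2 2 2 = 0 := by rw [ep_cast]; norm_num [show epz 2 2 2 2 = 0 from by decide]
@[simp] lemma ep_2223 : ep 2 2 2 3 = 0 := by rw [ep_cast]; norm_num [show epz 2 2 2 3 = 0 from by decide]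
@[simp] lemma ep_2230 : ep 2 2 3 0 = 0 := by rw [ep_cast]; norm_num [show epz 2 2 3 0 = 0 from by decide]
@[simp] lemma ep_2231 : ep 2 2 3 1 = 0 := by rw [ep_cast]; norm_num [show epz 2 2 3 1 = 0 from by decide]
@[simp] lemma ep_2232 : ep 2 2 3 2 = 0 := by rw [ep_cast]; norm_num [show epz 2 2 3 2 = 0 from by decide]
@[simp] lemma ep_2233 : ep 2 2 3 3 = 0 := by rw [ep_cast]; norm_num [show epz 2 2 3 3 = 0 from by decide]
@[simp] lemma ep_2300 : ep 2 3 0 0 = 0 := by rw [ep_cast]; norm_num [show epz 2 3 0 0 = 0 from by decide]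
@[simp] lemma ep_2301 : ep 2 3 0 1 = 1 := by rw [ep_cast]; norm_num [show epz 2 3 0 1 = 1 from by decide]
@[simp] lemma ep_2302 : ep 2 3 0 2 = 0 := by rw [ep_cast]; norm_num [show epz 2 3 0 2 = 0 from by decide]
@[simp] lemma ep_2303 : ep 2 3 0 3 = 0 := by rw [ep_cast]; norm_num [show epz 2 3 0 3 = 0 from by decide]
@[simp] lemma ep_2310 : ep 2 3 1 0 = -1 := by rw [ep_cast]; norm_num [show epz 2 3 1 0 = -1 from by decide]
@[simp] lemma ep_2311 : ep 2 3 1 1 = 0 := by rw [ep_cast]; norm_num [show epz 2 3 1 1 = 0 from by decide]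
@[simp] lemma ep_2312 : ep 2 3 1 2 = 0 := by rw [ep_cast]; norm_num [show epz 2 3 1 2 = 0 from by decide]
@[simp] lemma ep_2313 : ep 2 3 1 3 = 0 := by rw [ep_cast]; norm_num [show epz 2 3 1 3 = 0 from by decide]
@[simp] lemma ep_2320 : ep 2 3 2 0 = 0 := by rw [ep_cast]; norm_num [show epz 2 3 2 0 = 0 from by decide]
@[simp] lemma ep_2321 : ep 2 3 2 1 = 0 := by rw [ep_cast]; norm_num [show epz 2 3 2 1 = 0 from by decide]
@[simp] lemma ep_2322 : ep 2 3 2 2 = 0 := by rw [ep_cast]; norm_num [show epz 2 3 2 2 = 0 from by decide]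
@[simp] lemma ep_2323 : ep 2 3 2 3 = 0 := by rw [ep_cast]; norm_num [show epz 2 3 2 3 = 0 from by decide]
@[simp] lemma ep_2330 : ep 2 3 3 0 = 0 := by rw [ep_cast]; norm_num [show epz 2 3 3 0 = 0 from by decide]
@[simp] lemma ep_2331 : ep 2 3 3 1 = 0 := by rw [ep_cast]; norm_num [show epz 2 3 3 1 = 0 from by decide]
@[simp] lemma ep_2332 : ep 2 3 3 2 = 0 := by rw [ep_cast]; norm_num [show epz 2 3 3 2 = 0 from by decide]
@[simp] lemma ep_2333 : ep 2 3 3 3 = 0 := by rw [ep_cast]; norm_num [show epz 2 3 3 3 = 0 from by decide]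
@[simp] lemma ep_3000 : ep 3 0 0 0 = 0 := by rw [ep_cast]; norm_num [show epz 3 0 0 0 = 0 from by decide]
@[simp] lemma ep_3001 : ep 3 0 0 1 = 0 := by rw [ep_cast]; norm_num [show epz 3 0 0 1 = 0 from by decide]
@[simp] lemma ep_3002 : ep 3 0 0 2 = 0 := by rw [ep_cast]; norm_num [show epz 3 0 0 2 = 0 from by decide]
@[simp] lemma ep_3003 : ep 3 0 0 3 = 0 := by rw [ep_cast]; norm_num [show epz 3 0 0 3 = 0 from by decide]
@[simp] lemma ep_3010 : ep 3 0 1 0 = 0 := by rw [ep_cast]; norm_num [show epz 3 0 1 0 = 0 from by decide]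
@[simp] lemma ep_3011 : ep 3 0 1 1 = 0 := by rw [ep_cast]; norm_num [show epz 3 0 1 1 = 0 from by decide]
@[simp] lemma ep_3012 : ep 3 0 1 2 = -1 := by rw [ep_cast]; norm_num [show epz 3 0 1 2 = -1 from by decide]
@[simp] lemma ep_3013 : ep 3 0 1 3 = 0 := by rw [ep_cast]; norm_num [show epz 3 0 1 3 = 0 from by decide]
@[simp] lemma ep_3020 : ep 3 0 2 0 = 0 := by rw [ep_cast]; norm_num [show epz 3 0 2 0 = 0 from by decide]
@[simp] lemma ep_3021 : ep 3 0 2 1 = 1 := by rw [ep_cast]; norm_num [show epz 3 0 2 1 = 1 from by decide]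
@[simp] lemma ep_3022 : ep 3 0 2 2 = 0 := by rw [ep_cast]; norm_num [show epz 3 0 2 2 = 0 from by decide]
@[simp] lemma ep_3023 : ep 3 0 2 3 = 0 := by rw [ep_cast]; norm_num [show epz 3 0 2 3 = 0 from by decide]
@[simp] lemma ep_3030 : ep 3 0 3 0 = 0 := by rw [ep_cast]; norm_num [show epz 3 0 3 0 = 0 from by decide]
@[simp] lemma ep_3031 : ep 3 0 3 1 = 0 := by rw [ep_cast]; norm_num [show epz 3 0 3 1 = 0 from by decide]
@[simp] lemma ep_3032 : ep 3 0 3 2 = 0 := by rw [ep_cast]; norm_num [show epz 3 0 3 2 = 0 from by decide]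
@[simp] lemma ep_3033 : ep 3 0 3 3 = 0 := by rw [ep_cast]; norm_num [show epz 3 0 3 3 = 0 from by decide]
@[simp] lemma ep_3100 : ep 3 1 0 0 = 0 := by rw [ep_cast]; norm_num [show epz 3 1 0 0 = 0 from by decide]
@[simp] lemma ep_3101 : ep 3 1 0 1 = 0 := by rw [ep_cast]; norm_num [show epz 3 1 0 1 = 0 from by decide]
@[simp] lemma ep_3102 : ep 3 1 0 2 = 1 := by rw [ep_cast]; norm_num [show epz 3 1 0 2 = 1 from by decide]
@[simp] lemma ep_3103 : ep 3 1 0 3 = 0 := by rw [ep_cast]; norm_num [show epz 3 1 0 3 = 0 from by decide]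
@[simp] lemma ep_3110 : ep 3 1 1 0 = 0 := by rw [ep_cast]; norm_num [show epz 3 1 1 0 = 0 from by decide]
@[simp] lemma ep_3111 : ep 3 1 1 1 = 0 := by rw [ep_cast]; norm_num [show epz 3 1 1 1 = 0 from by decide]
@[simp] lemma ep_3112 : ep 3 1 1 2 = 0 := by rw [ep_cast]; norm_num [show epz 3 1 1 2 = 0 from by decide]
@[simp] lemma ep_3113 : ep 3 1 1 3 = 0 := by rw [ep_cast]; norm_num [show epz 3 1 1 3 = 0 from by decide]
@[simp] lemma ep_3120 : ep 3 1 2 0 = -1 := by rw [ep_cast]; norm_num [show epz 3 1 2 0 = -1 from by decide]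
@[simp] lemma ep_3121 : ep 3 1 2 1 = 0 := by rw [ep_cast]; norm_num [show epz 3 1 2 1 = 0 from by decide]
@[simp] lemma ep_3122 : ep 3 1 2 2 = 0 := by rw [ep_cast]; norm_num [show epz 3 1 2 2 = 0 from by decide]
@[simp] lemma ep_3123 : ep 3 1 2 3 = 0 := by rw [ep_cast]; norm_num [show epz 3 1 2 3 = 0 from by decide]
@[simp] lemma ep_3130 : ep 3 1 3 0 = 0 := by rw [ep_cast]; norm_num [show epz 3 1 3 0 = 0 from by decide]
@[simp] lemma ep_3131 : ep 3 1 3 1 = 0 := by rw [ep_cast]; norm_num [show epz 3 1 3 1 = 0 from by decide]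
@[simp] lemma ep_3132 : ep 3 1 3 2 = 0 := by rw [ep_cast]; norm_num [show epz 3 1 3 2 = 0 from by decide]
@[simp] lemma ep_3133 : ep 3 1 3 3 = 0 := by rw [ep_cast]; norm_num [show epz 3 1 3 3 = 0 from by decide]
@[simp] lemma ep_3200 : ep 3 2 0 0 = 0 := by rw [ep_cast]; norm_num [show epz 3 2 0 0 = 0 from by decide]
@[simp] lemma ep_3201 : ep 3 2 0 1 = -1 := by rw [ep_cast]; norm_num [show epz 3 2 0 1 = -1 from by decide]
@[simp] lemma ep_3202 : ep 3 2 0 2 = 0 := by rw [ep_cast]; norm_num [show epz 3 2 0 2 = 0 from by decide]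
@[simp] lemma ep_3203 : ep 3 2 0 3 = 0 := by rw [ep_cast]; norm_num [show epz 3 2 0 3 = 0 from by decide]
@[simp] lemma ep_3210 : ep 3 2 1 0 = 1 := by rw [ep_cast]; norm_num [show epz 3 2 1 0 = 1 from by decide]
@[simp] lemma ep_3211 : ep 3 2 1 1 = 0 := by rw [ep_cast]; norm_num [show epz 3 2 1 1 = 0 from by decide]
@[simp] lemma ep_3212 : ep 3 2 1 2 = 0 := by rw [ep_cast]; norm_num [show epz 3 2 1 2 = 0 from by decide]
@[simp] lemma ep_3213 : ep 3 2 1 3 = 0 := by rw [ep_cast]; norm_num [show epz 3 2 1 3 = 0 from by decide]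
@[simp] lemma ep_3220 : ep 3 2 2 0 = 0 := by rw [ep_cast]; norm_num [show epz 3 2 2 0 = 0 from by decide]
@[simp] lemma ep_3221 : ep 3 2 2 1 = 0 := by rw [ep_cast]; norm_num [show epz 3 2 2 1 = 0 from by decide]
@[simp] lemma ep_3222 : ep 3 2 2 2 = 0 := by rw [ep_cast]; norm_num [show epz 3 2 2 2 = 0 from by decide]
@[simp] lemma ep_3223 : ep 3 2 2 3 = 0 := by rw [ep_cast]; norm_num [show epz 3 2 2 3 = 0 from by decide]
@[simp] lemma ep_3230 : ep 3 2 3 0 = 0 := by rw [ep_cast]; norm_num [show epz 3 2 3 0 = 0 from by decide]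
@[simp] lemma ep_3231 : ep 3 2 3 1 = 0 := by rw [ep_cast]; norm_num [show epz 3 2 3 1 = 0 from by decide]
@[simp] lemma ep_3232 : ep 3 2 3 2 = 0 := by rw [ep_cast]; norm_num [show epz 3 2 3 2 = 0 from by decide]
@[simp] lemma ep_3233 : ep 3 2 3 3 = 0 := by rw [ep_cast]; norm_num [show epz 3 2 3 3 = 0 from by decide]
@[simp] lemma ep_3300 : ep 3 3 0 0 = 0 := by rw [ep_cast]; norm_num [show epz 3 3 0 0 = 0 from by decide]
@[simp] lemma ep_3301 : ep 3 3 0 1 = 0 := by rw [ep_cast]; norm_num [show epz 3 3 0 1 = 0 from by decide]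
@[simp] lemma ep_3302 : ep 3 3 0 2 = 0 := by rw [ep_cast]; norm_num [show epz 3 3 0 2 = 0 from by decide]
@[simp] lemma ep_3303 : ep 3 3 0 3 = 0 := by rw [ep_cast]; norm_num [show epz 3 3 0 3 = 0 from by decide]
@[simp] lemma ep_3310 : ep 3 3 1 0 = 0 := by rw [ep_cast]; norm_num [show epz 3 3 1 0 = 0 from by decide]
@[simp] lemma ep_3311 : ep 3 3 1 1 = 0 := by rw [ep_cast]; norm_num [show epz 3 3 1 1 = 0 from by decide]
@[simp] lemma ep_3312 : ep 3 3 1 2 = 0 := by rw [ep_cast]; norm_num [show epz 3 3 1 2 = 0 from by decide]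
@[simp] lemma ep_3313 : ep 3 3 1 3 = 0 := by rw [ep_cast]; norm_num [show epz 3 3 1 3 = 0 from by decide]
@[simp] lemma ep_3320 : ep 3 3 2 0 = 0 := by rw [ep_cast]; norm_num [show epz 3 3 2 0 = 0 from by decide]
@[simp] lemma ep_3321 : ep 3 3 2 1 = 0 := by rw [ep_cast]; norm_num [show epz 3 3 2 1 = 0 from by decide]
@[simp] lemma ep_3322 : ep 3 3 2 2 = 0 := by rw [ep_cast]; norm_num [show epz 3 3 2 2 = 0 from by decide]
@[simp] lemma ep_3323 : ep 3 3 2 3 = 0 := by rw [ep_cast]; norm_num [show epz 3 3 2 3 = 0 from by decide]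
@[simp] lemma ep_3330 : ep 3 3 3 0 = 0 := by rw [ep_cast]; norm_num [show epz 3 3 3 0 = 0 from by decide]
@[simp] lemma ep_3331 : ep 3 3 3 1 = 0 := by rw [ep_cast]; norm_num [show epz 3 3 3 1 = 0 from by decide]
@[simp] lemma ep_3332 : ep 3 3 3 2 = 0 := by rw [ep_cast]; norm_num [show epz 3 3 3 2 = 0 from by decide]
@[simp] lemma ep_3333 : ep 3 3 3 3 = 0 := by rw [ep_cast]; norm_num [show epz 3 3 3 3 = 0 from by decide]

-- expanding a vector in the standard basis
lemma sum_bas (v : E4) : (∑ j, v j • bas j) = v := by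
  funext i
  rw [Finset.sum_apply]
  fin_cases i <;> simp [bas, Fin.sum_univ_four]

lemma clm_apply_expand (L : E4 →L[ℝ] ℝ) (v : E4) : L v = ∑ j, v j * L (bas j) := by
  conv_lhs => rw [← sum_bas v]
  rw [map_sum]
  simp

section fields
variable {V : E4 → E4} (hV : ContDiffOn ℝ (⊤ : ℕ∞) V Ur)
include hV

lemma contDiffOn_HzV : ContDiffOn ℝ (⊤ : ℕ∞) (HzV V) Ur := by
  have : HzV V = fun y => V (ret y) := rfl
  rw [this]
  apply hV.comp contDiffOn_ret
  intro y hy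
  exact Hb_subset_Ur (ret_mem_Hb hy)

lemma contDiffAt_Fc (a : Fin 4) {y : E4} (hy : y ∈ Ur) :
    ContDiffAt ℝ (⊤ : ℕ∞) (fun z => HzV V z a) y := by
  have h1 : ContDiffAt ℝ (⊤ : ℕ∞) (HzV V) y :=
    (contDiffOn_HzV hV y hy).contDiffAt (Ur_mem_nhds hy)
  have h2 : ContDiffAt ℝ (⊤ : ℕ∞) (fun w : E4 => w a) (HzV V y) :=
    (ContinuousLinearMap.proj (R := ℝ) (φ := fun _ : Fin 4 => ℝ) a).contDiff.contDiffAt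
  exact ContDiffAt.comp (g := fun w : E4 => w a) (f := HzV V) y h2 h1

lemma diff_Fc (a : Fin 4) {y : E4} (hy : y ∈ Ur) :
    DifferentiableAt ℝ (fun z => HzV V z a) y :=
  (contDiffAt_Fc hV a hy).differentiableAt (by simp)

omit hV in
lemma HzV_smul {c : ℝ} (hc : 0 < c) {y : E4} (hy : y ∈ Ur) :
    HzV V (c • y) = HzV V y := by
  unfold HzV
  rw [ret_smul hc hy]

/-- scaling of first derivatives -/
lemma fderiv_Fc_scale (a : Fin 4) {c : ℝ} (hc : 0 < c) {y : E4} (hy : y ∈ Ur) (v : E4) :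
    fderiv ℝ (fun z => HzV V z a) y v
      = c * fderiv ℝ (fun z => HzV V z a) (c • y) v := by
  have hcy : c • y ∈ Ur := smul_mem_Ur hc hy
  have hsm : HasFDerivAt (fun z : E4 => c • z) (c • ContinuousLinearMap.id ℝ E4) y :=
    ((ContinuousLinearMap.id ℝ E4).hasFDerivAt).const_smul c
  have hF : HasFDerivAt (fun z => HzV V z a)
      (fderiv ℝ (fun z => HzV V z a) (c • y)) (c • y) :=
    (diff_Fc hV a hcy).hasFDerivAt
  have hcomp : HasFDerivAt (fun z : E4 => HzV V (c • z) a)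
      ((fderiv ℝ (fun z => HzV V z a) (c • y)).comp (c • ContinuousLinearMap.id ℝ E4)) y :=
    hF.comp y hsm
  have heq : (fun z : E4 => HzV V (c • z) a) =ᶠ[nhds y] (fun z => HzV V z a) := by
    filter_upwards [Ur_mem_nhds hy] with z hz
    rw [HzV_smul (V := V) hc hz]
  have := (hcomp.congr_of_eventuallyEq heq.symm).fderiv
  rw [this]
  simp [mul_comm]

/-- homogeneity: radial derivative vanishes -/
lemma fderiv_Fc_radial (a : Fin 4) {y : E4} (hy : y ∈ Ur) :
    fderiv ℝ (fun z => HzV V z a) y y = 0 := by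
  have hψ : HasDerivAt (fun t : ℝ => t • y) ((1:ℝ) • y) 1 := by
    simpa using (hasDerivAt_id (1:ℝ)).smul_const y
  have h1 : (1:ℝ) • y = y := one_smul _ _
  have hφ : HasDerivAt (fun t : ℝ => HzV V (t • y) a)
      (fderiv ℝ (fun z => HzV V z a) y y) 1 := by
    have hF : HasFDerivAt (fun z => HzV V z a)
        (fderiv ℝ (fun z => HzV V z a) y) ((fun t : ℝ => t • y) 1) := by
      simpa using (diff_Fc hV a hy).hasFDerivAt
    have hψ' : HasDerivAt (fun t : ℝ => t • y) y 1 := by simpa using hψ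
    exact hF.comp_hasDerivAt (1:ℝ) hψ'
  have heq : (fun t : ℝ => HzV V (t • y) a) =ᶠ[nhds (1:ℝ)] (fun _ => HzV V y a) := by
    filter_upwards [eventually_gt_nhds (by norm_num : (0:ℝ) < 1)] with t ht
    rw [HzV_smul ht hy]
  have h0 : HasDerivAt (fun _ : ℝ => HzV V y a) (fderiv ℝ (fun z => HzV V z a) y y) 1 :=
    hφ.congr_of_eventuallyEq heq.symm
  have := h0.deriv
  simp only [deriv_const] at this
  exact this.symm

/-- second derivative exists -/
lemma hasfderiv_fderiv_Fc (a : Fin 4) {y : E4} (hy : y ∈ Ur) :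
    HasFDerivAt (fderiv ℝ (fun z => HzV V z a))
      (fderiv ℝ (fderiv ℝ (fun z => HzV V z a)) y) y := by
  have h2 : ContDiffAt ℝ 1 (fderiv ℝ (fun z => HzV V z a)) y :=
    (contDiffAt_Fc hV a hy).fderiv_right (WithTop.coe_le_coe.mpr le_top)
  exact (h2.differentiableAt one_ne_zero).hasFDerivAt

/-- derivative of the partial-derivative function -/
lemma hasfderiv_dFc (a b : Fin 4) {y : E4} (hy : y ∈ Ur) :
    HasFDerivAt (fun z => fderiv ℝ (fun w => HzV V w a) z (bas b))
      ((ContinuousLinearMap.apply ℝ ℝ (bas b)).comp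
        (fderiv ℝ (fderiv ℝ (fun z => HzV V z a)) y)) y :=
  (ContinuousLinearMap.apply ℝ ℝ (bas b)).hasFDerivAt.comp y (hasfderiv_fderiv_Fc hV a hy)

lemma diff_dFc (a b : Fin 4) {y : E4} (hy : y ∈ Ur) :
    DifferentiableAt ℝ (fun z => fderiv ℝ (fun w => HzV V w a) z (bas b)) y :=
  (hasfderiv_dFc hV a b hy).differentiableAt

lemma fderiv_dFc (a b : Fin 4) {y : E4} (hy : y ∈ Ur) (v : E4) :
    fderiv ℝ (fun z => fderiv ℝ (fun w => HzV V w a) z (bas b)) y v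
      = fderiv ℝ (fderiv ℝ (fun z => HzV V z a)) y v (bas b) := by
  rw [(hasfderiv_dFc hV a b hy).fderiv]
  rfl

/-- Schwarz symmetry -/
lemma ddF_symm (a : Fin 4) {y : E4} (hy : y ∈ Ur) (v w : E4) :
    fderiv ℝ (fderiv ℝ (fun z => HzV V z a)) y v w
      = fderiv ℝ (fderiv ℝ (fun z => HzV V z a)) y w v := by
  apply second_derivative_symmetric_of_eventually
    (f := fun z => HzV V z a) (f' := fun z => fderiv ℝ (fun w => HzV V w a) z)
  · filter_upwards [Ur_mem_nhds hy] with z hz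
    exact (diff_Fc hV a hz).hasFDerivAt
  · exact hasfderiv_fderiv_Fc hV a hy

end fields

-- fderiv evaluation helpers
lemma fderiv_coord_apply (d : Fin 4) (y v : E4) :
    fderiv ℝ (fun z : E4 => z d) y v = v d := by
  rw [show (fun z : E4 => z d)
      = ⇑(ContinuousLinearMap.proj (R := ℝ) (φ := fun _ : Fin 4 => ℝ) d) from rfl,
    ContinuousLinearMap.fderiv]
  rfl

lemma diff_coord (d : Fin 4) (y : E4) : DifferentiableAt ℝ (fun z : E4 => z d) y :=
  (ContinuousLinearMap.proj (R := ℝ) (φ := fun _ : Fin 4 => ℝ) d).differentiableAt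

lemma fderiv_sum_apply4 {A : Fin 4 → E4 → ℝ} {y v : E4}
    (h : ∀ a, DifferentiableAt ℝ (A a) y) :
    fderiv ℝ (fun z => ∑ a, A a z) y v = ∑ a, fderiv ℝ (A a) y v := by
  rw [fderiv_fun_sum (fun a _ => h a)]
  simp

lemma fderiv_const_mul_apply {A : E4 → ℝ} {y v : E4} (h : DifferentiableAt ℝ A y) (c : ℝ) :
    fderiv ℝ (fun z => c * A z) y v = c * fderiv ℝ A y v := by
  rw [fderiv_const_mul h c]; rfl

lemma fderiv_coord_mul_apply {g : E4 → ℝ} {y v : E4} (hg : DifferentiableAt ℝ g y) (d : Fin 4) :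
    fderiv ℝ (fun z => z d * g z) y v = v d * g y + y d * fderiv ℝ g y v := by
  have h := ((diff_coord d y).hasFDerivAt.fun_mul hg.hasFDerivAt).fderiv
  rw [show (fun z : E4 => z d * g z) = fun z => (fun w : E4 => w d) z * g z from rfl, h]
  simp only [ContinuousLinearMap.add_apply, ContinuousLinearMap.smul_apply, smul_eq_mul,
    fderiv_coord_apply]
  ring

lemma sum_bas_pick (w : Fin 4 → ℝ) (i : Fin 4) :
    ∑ a, sg a * ((bas i) a * w a) = sg i * w i := by
  have h : ∀ a, sg a * ((bas i) a * w a) = if a = i then sg i * w i else 0 := by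
    intro a; by_cases h : a = i <;> simp [bas, h]
  rw [Finset.sum_congr rfl (fun a _ => h a)]
  simp

lemma sum_bas_pick' (w : Fin 4 → ℝ) (i : Fin 4) :
    ∑ a, (bas i) a * w a = w i := by
  have h : ∀ a, (bas i) a * w a = if a = i then w i else 0 := by
    intro a; by_cases h : a = i <;> simp [bas, h]
  rw [Finset.sum_congr rfl (fun a _ => h a)]
  simp

lemma fderiv_add_apply' {A B : E4 → ℝ} {y v : E4} (hA : DifferentiableAt ℝ A y)
    (hB : DifferentiableAt ℝ B y) :
    fderiv ℝ (fun z => A z + B z) y v = fderiv ℝ A y v + fderiv ℝ B y v := by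
  rw [fderiv_fun_add hA hB]; rfl

lemma fderiv_mul_apply' {A B : E4 → ℝ} {y v : E4} (hA : DifferentiableAt ℝ A y)
    (hB : DifferentiableAt ℝ B y) :
    fderiv ℝ (fun z => A z * B z) y v
      = fderiv ℝ A y v * B y + A y * fderiv ℝ B y v := by
  have h := (hA.hasFDerivAt.fun_mul hB.hasFDerivAt).fderiv
  rw [h]
  simp only [ContinuousLinearMap.add_apply, ContinuousLinearMap.smul_apply, smul_eq_mul]
  ring

lemma fderiv_sub_apply' {A B : E4 → ℝ} {y v : E4} (hA : DifferentiableAt ℝ A y)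
    (hB : DifferentiableAt ℝ B y) :
    fderiv ℝ (fun z => A z - B z) y v = fderiv ℝ A y v - fderiv ℝ B y v := by
  rw [fderiv_fun_sub hA hB]; rfl

lemma diff_q (y : E4) : DifferentiableAt ℝ (fun z : E4 => mk4 z z) y := by
  simp only [mk4_expand]
  fun_prop

lemma mk4_bas_right (u : E4) (a : Fin 4) : mk4 u (bas a) = sg a * u a := by
  fin_cases a <;> simp [mk4_expand] <;> try ring

lemma fderiv_q_apply (z v : E4) :
    fderiv ℝ (fun y : E4 => mk4 y y) z v = 2 * mk4 z v := by
  have h : (fun y : E4 => mk4 y y)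
      = fun y : E4 => y 0 * y 0 + y 1 * y 1 + y 2 * y 2 - y 3 * y 3 := by
    funext y; rw [mk4_expand]
  rw [h]
  have hc : ∀ d : Fin 4, DifferentiableAt ℝ (fun y : E4 => y d * y d) z :=
    fun d => (diff_coord d z).mul (diff_coord d z)
  rw [fderiv_sub_apply' (((hc 0).fun_add (hc 1)).fun_add (hc 2)) (hc 3),
    fderiv_add_apply' ((hc 0).fun_add (hc 1)) (hc 2),
    fderiv_add_apply' (hc 0) (hc 1)]
  rw [fderiv_coord_mul_apply (diff_coord 0 z) 0, fderiv_coord_mul_apply (diff_coord 1 z) 1,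
    fderiv_coord_mul_apply (diff_coord 2 z) 2, fderiv_coord_mul_apply (diff_coord 3 z) 3]
  simp only [fderiv_coord_apply]
  rw [mk4_expand]
  ring

lemma diff_mk4k (k : E4) (y : E4) : DifferentiableAt ℝ (fun z : E4 => mk4 k z) y := by
  simp only [mk4_expand]
  fun_prop

lemma fderiv_mk4k_apply (k : E4) (z v : E4) :
    fderiv ℝ (fun y : E4 => mk4 k y) z v = mk4 k v := by
  have h : (fun y : E4 => mk4 k y)
      = fun y : E4 => k 0 * y 0 + k 1 * y 1 + k 2 * y 2 - k 3 * y 3 := by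
    funext y; rw [mk4_expand]
  rw [h]
  have hc : ∀ d : Fin 4, DifferentiableAt ℝ (fun y : E4 => k d * y d) z :=
    fun d => (diff_coord d z).const_mul _
  rw [fderiv_sub_apply' (((hc 0).fun_add (hc 1)).fun_add (hc 2)) (hc 3),
    fderiv_add_apply' ((hc 0).fun_add (hc 1)) (hc 2),
    fderiv_add_apply' (hc 0) (hc 1)]
  rw [fderiv_const_mul_apply (diff_coord 0 z), fderiv_const_mul_apply (diff_coord 1 z),
    fderiv_const_mul_apply (diff_coord 2 z), fderiv_const_mul_apply (diff_coord 3 z)]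
  simp only [fderiv_coord_apply]
  rw [mk4_expand]

/-- the 0-homogeneous extension of the translation function, on Ur -/
lemma Hz_trfn_eq (k : E4) : ∀ y ∈ Ur,
    Hz (trfn k) y = (Real.sqrt (mk4 y y))⁻¹ * mk4 k y := by
  intro y hy
  show trfn k (ret y) = _
  rw [trfn, ret, mk4_smul_right]

lemma diff_invsqrtq {y : E4} (hy : y ∈ Ur) :
    HasFDerivAt (fun z : E4 => (Real.sqrt (mk4 z z))⁻¹)
      ((-(1 / (2 * Real.sqrt (mk4 y y))) / (Real.sqrt (mk4 y y))^2)
        • fderiv ℝ (fun z : E4 => mk4 z z) y) y := by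
  have hq : HasFDerivAt (fun z : E4 => mk4 z z)
      (fderiv ℝ (fun z : E4 => mk4 z z) y) y := (diff_q y).hasFDerivAt
  have hg : HasDerivAt (fun t : ℝ => (Real.sqrt t)⁻¹)
      (-(1 / (2 * Real.sqrt (mk4 y y))) / (Real.sqrt (mk4 y y))^2) (mk4 y y) := by
    have h1 : HasDerivAt Real.sqrt (1 / (2 * Real.sqrt (mk4 y y))) (mk4 y y) :=
      Real.hasDerivAt_sqrt (mk4_pos hy).ne'
    exact h1.inv (sqrt_mk4_pos hy).ne'
  exact HasDerivAt.comp_hasFDerivAt (f := fun z : E4 => mk4 z z) y hg hq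

/-- gradient of the asymptotic translation at points of H -/
lemma pd_Hz_trfn {z : E4} (hz : z ∈ Hb) (k : E4) (a : Fin 4) :
    pd (Hz (trfn k)) a z = sg a * k a - mk4 k z * (sg a * z a) := by
  have hzU : z ∈ Ur := Hb_subset_Ur hz
  have hq1 : mk4 z z = 1 := hz
  have heq : Hz (trfn k) =ᶠ[nhds z]
      (fun y : E4 => (Real.sqrt (mk4 y y))⁻¹ * mk4 k y) := by
    filter_upwards [Ur_mem_nhds hzU] with w hw
    exact Hz_trfn_eq k w hw
  have hinv : DifferentiableAt ℝ (fun y : E4 => (Real.sqrt (mk4 y y))⁻¹) z :=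
    (diff_invsqrtq hzU).differentiableAt
  rw [pd, heq.fderiv_eq,
    fderiv_mul_apply' hinv (diff_mk4k k z), (diff_invsqrtq hzU).fderiv]
  simp only [ContinuousLinearMap.smul_apply, smul_eq_mul, fderiv_q_apply,
    fderiv_mk4k_apply, mk4_bas_right, hq1, Real.sqrt_one]
  ring

set_option linter.unusedSectionVars false

section pointeqs
variable {Ee Bb : E4 → E4} (hE : ContDiffOn ℝ (⊤ : ℕ∞) Ee Ur)
    (htE : ∀ x ∈ Hb, Tang x (Ee x))

include hE htE in
/-- tangency extended to Ur -/
lemma tang_Ur : ∀ y ∈ Ur, ∑ a, sg a * (y a * HzV Ee y a) = 0 := by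
  intro y hy
  have h2 : mk4 (ret y) (Ee (ret y)) = 0 := htE (ret y) (ret_mem_Hb hy)
  have h1 : mk4 y (HzV Ee y) = 0 := by
    calc mk4 y (HzV Ee y)
        = mk4 (Real.sqrt (mk4 y y) • ret y) (Ee (ret y)) := by
          rw [← self_eq_sqrt_smul_ret hy]; rfl
      _ = Real.sqrt (mk4 y y) * mk4 (ret y) (Ee (ret y)) := mk4_smul_left _ _ _
      _ = 0 := by rw [h2, mul_zero]
  rw [← h1, mk4]
  exact Finset.sum_congr rfl fun a _ => by ring

include hE htE in
/-- first derivative of tangency on Ur -/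
lemma tF1_Ur (i : Fin 4) : ∀ y ∈ Ur,
    sg i * HzV Ee y i
      + ∑ a, sg a * (y a * fderiv ℝ (fun z => HzV Ee z a) y (bas i)) = 0 := by
  intro y hy
  have hdA : ∀ a : Fin 4, DifferentiableAt ℝ (fun z : E4 => sg a * (z a * HzV Ee z a)) y :=
    fun a => ((diff_coord a y).mul (diff_Fc hE a hy)).const_mul _
  have h0 : fderiv ℝ (fun z : E4 => ∑ a, sg a * (z a * HzV Ee z a)) y
      = fderiv ℝ (fun _ : E4 => (0:ℝ)) y := by
    apply Filter.EventuallyEq.fderiv_eq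
    filter_upwards [Ur_mem_nhds hy] with z hz
    exact tang_Ur hE htE z hz
  have h1 : fderiv ℝ (fun z : E4 => ∑ a, sg a * (z a * HzV Ee z a)) y (bas i) = 0 := by
    rw [h0]; simp
  rw [fderiv_sum_apply4 hdA] at h1
  have h2 : ∀ a : Fin 4, fderiv ℝ (fun z : E4 => sg a * (z a * HzV Ee z a)) y (bas i)
      = sg a * ((bas i) a * HzV Ee y a + y a * fderiv ℝ (fun z => HzV Ee z a) y (bas i)) := by
    intro a
    rw [fderiv_const_mul_apply ((diff_coord a y).fun_mul (diff_Fc hE a hy)),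
      fderiv_coord_mul_apply (diff_Fc hE a hy)]
  rw [Finset.sum_congr rfl (fun a _ => h2 a)] at h1
  have h4 : ∑ a, sg a * ((bas i) a * HzV Ee y a
        + y a * fderiv ℝ (fun z => HzV Ee z a) y (bas i))
      = ∑ a, sg a * ((bas i) a * HzV Ee y a)
        + ∑ a, sg a * (y a * fderiv ℝ (fun z => HzV Ee z a) y (bas i)) := by
    rw [← Finset.sum_add_distrib]
    exact Finset.sum_congr rfl fun a _ => by ring
  have h3 := sum_bas_pick (fun a => HzV Ee y a) i
  linear_combination h1 - h4 - h3

include hE htE in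
/-- second derivative of tangency, at a point of H -/
lemma tF2_pt {x : E4} (hx : x ∈ Ur) (j i : Fin 4) :
    sg i * fderiv ℝ (fun z => HzV Ee z i) x (bas j)
      + ∑ a, sg a * ((bas j) a * fderiv ℝ (fun z => HzV Ee z a) x (bas i)
          + x a * fderiv ℝ (fderiv ℝ (fun z => HzV Ee z a)) x (bas j) (bas i)) = 0 := by
  have hdA : ∀ a : Fin 4, DifferentiableAt ℝ
      (fun z : E4 => sg a * (z a * fderiv ℝ (fun w => HzV Ee w a) z (bas i))) x :=
    fun a => ((diff_coord a x).mul (diff_dFc hE a i hx)).const_mul _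
  have hdF : DifferentiableAt ℝ (fun z : E4 => sg i * HzV Ee z i) x :=
    (diff_Fc hE i hx).const_mul _
  have hdS : DifferentiableAt ℝ
      (fun z : E4 => ∑ a, sg a * (z a * fderiv ℝ (fun w => HzV Ee w a) z (bas i))) x := by
    apply DifferentiableAt.fun_sum
    intro a _
    exact hdA a
  have h0 : fderiv ℝ (fun z : E4 => sg i * HzV Ee z i
        + ∑ a, sg a * (z a * fderiv ℝ (fun w => HzV Ee w a) z (bas i))) x
      = fderiv ℝ (fun _ : E4 => (0:ℝ)) x := by
    apply Filter.EventuallyEq.fderiv_eq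
    filter_upwards [Ur_mem_nhds hx] with z hz
    exact tF1_Ur hE htE i z hz
  have h1 : fderiv ℝ (fun z : E4 => sg i * HzV Ee z i
        + ∑ a, sg a * (z a * fderiv ℝ (fun w => HzV Ee w a) z (bas i))) x (bas j) = 0 := by
    rw [h0]; simp
  rw [fderiv_add_apply' hdF hdS, fderiv_const_mul_apply (diff_Fc hE i hx),
    fderiv_sum_apply4 hdA] at h1
  have h2 : ∀ a : Fin 4, fderiv ℝ
        (fun z : E4 => sg a * (z a * fderiv ℝ (fun w => HzV Ee w a) z (bas i))) x (bas j)
      = sg a * ((bas j) a * fderiv ℝ (fun z => HzV Ee z a) x (bas i)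
          + x a * fderiv ℝ (fderiv ℝ (fun z => HzV Ee z a)) x (bas j) (bas i)) := by
    intro a
    rw [fderiv_const_mul_apply ((diff_coord a x).fun_mul (diff_dFc hE a i hx)),
      fderiv_coord_mul_apply (diff_dFc hE a i hx), fderiv_dFc hE a i hx]
  rw [Finset.sum_congr rfl (fun a _ => h2 a)] at h1
  linear_combination h1

include hE in
/-- homogeneity on Ur -/
lemma hF_Ur (a : Fin 4) : ∀ y ∈ Ur,
    ∑ j, y j * fderiv ℝ (fun z => HzV Ee z a) y (bas j) = 0 := by
  intro y hy
  have h1 := fderiv_Fc_radial hE a hy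
  rw [clm_apply_expand] at h1
  exact h1

include hE in
/-- derivative of homogeneity at a point -/
lemma hF1_pt {x : E4} (hx : x ∈ Ur) (i a : Fin 4) :
    fderiv ℝ (fun z => HzV Ee z a) x (bas i)
      + ∑ j, x j * fderiv ℝ (fderiv ℝ (fun z => HzV Ee z a)) x (bas i) (bas j) = 0 := by
  have hdA : ∀ j : Fin 4, DifferentiableAt ℝ
      (fun z : E4 => z j * fderiv ℝ (fun w => HzV Ee w a) z (bas j)) x :=
    fun j => (diff_coord j x).mul (diff_dFc hE a j hx)
  have h0 : fderiv ℝ (fun z : E4 =>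
        ∑ j, z j * fderiv ℝ (fun w => HzV Ee w a) z (bas j)) x
      = fderiv ℝ (fun _ : E4 => (0:ℝ)) x := by
    apply Filter.EventuallyEq.fderiv_eq
    filter_upwards [Ur_mem_nhds hx] with z hz
    exact hF_Ur hE a z hz
  have h1 : fderiv ℝ (fun z : E4 =>
        ∑ j, z j * fderiv ℝ (fun w => HzV Ee w a) z (bas j)) x (bas i) = 0 := by
    rw [h0]; simp
  rw [fderiv_sum_apply4 hdA] at h1
  have h2 : ∀ j : Fin 4, fderiv ℝ
        (fun z : E4 => z j * fderiv ℝ (fun w => HzV Ee w a) z (bas j)) x (bas i)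
      = (bas i) j * fderiv ℝ (fun z => HzV Ee z a) x (bas j)
        + x j * fderiv ℝ (fderiv ℝ (fun z => HzV Ee z a)) x (bas i) (bas j) := by
    intro j
    rw [fderiv_coord_mul_apply (diff_dFc hE a j hx), fderiv_dFc hE a j hx]
  rw [Finset.sum_congr rfl (fun j _ => h2 j)] at h1
  have h4 : ∑ j, ((bas i) j * fderiv ℝ (fun z => HzV Ee z a) x (bas j)
        + x j * fderiv ℝ (fderiv ℝ (fun z => HzV Ee z a)) x (bas i) (bas j))
      = ∑ j, (bas i) j * fderiv ℝ (fun z => HzV Ee z a) x (bas j)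
        + ∑ j, x j * fderiv ℝ (fderiv ℝ (fun z => HzV Ee z a)) x (bas i) (bas j) :=
    Finset.sum_add_distrib
  have h3 := sum_bas_pick' (fun j => fderiv ℝ (fun z => HzV Ee z a) x (bas j)) i
  linear_combination h1 - h4 - h3

end pointeqs

section pointeqs2
variable {Ee Bb : E4 → E4} (hE : ContDiffOn ℝ (⊤ : ℕ∞) Ee Ur) (hB : ContDiffOn ℝ (⊤ : ℕ∞) Bb Ur)

include hE in
lemma divH_eq {y : E4} (hy : y ∈ Ur) :
    divH Ee y = ∑ i, fderiv ℝ (fun z => HzV Ee z i) y (bas i) := by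
  unfold divH
  have hdp : ∀ i : Fin 4, DifferentiableAt ℝ (fun z => HzV Ee z i) y :=
    fun i => diff_Fc hE i hy
  have hpi : fderiv ℝ (HzV Ee) y
      = ContinuousLinearMap.pi (fun i => fderiv ℝ (fun z => HzV Ee z i) y) :=
    fderiv_pi hdp
  rw [hpi]
  simp

include hE in
lemma dv_Ur (hdiv : ∀ x ∈ Hb, divH Ee x = 0) : ∀ y ∈ Ur,
    ∑ a, fderiv ℝ (fun z => HzV Ee z a) y (bas a) = 0 := by
  intro y hy
  have hc : 0 < (Real.sqrt (mk4 y y))⁻¹ := inv_pos.2 (sqrt_mk4_pos hy)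
  have hcy : (Real.sqrt (mk4 y y))⁻¹ • y = ret y := rfl
  have hret : divH Ee (ret y) = 0 := hdiv (ret y) (ret_mem_Hb hy)
  rw [divH_eq hE (Hb_subset_Ur (ret_mem_Hb hy))] at hret
  have hsc : ∀ a : Fin 4, fderiv ℝ (fun z => HzV Ee z a) y (bas a)
      = (Real.sqrt (mk4 y y))⁻¹ * fderiv ℝ (fun z => HzV Ee z a) (ret y) (bas a) := by
    intro a
    rw [← hcy]
    exact fderiv_Fc_scale hE a hc hy (bas a)
  rw [Finset.sum_congr rfl (fun a _ => hsc a), ← Finset.mul_sum, hret, mul_zero]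

include hE in
lemma dv1_pt (hdiv : ∀ x ∈ Hb, divH Ee x = 0) {x : E4} (hx : x ∈ Ur) (i : Fin 4) :
    ∑ a, fderiv ℝ (fderiv ℝ (fun z => HzV Ee z a)) x (bas i) (bas a) = 0 := by
  have hdA : ∀ a : Fin 4, DifferentiableAt ℝ
      (fun z : E4 => fderiv ℝ (fun w => HzV Ee w a) z (bas a)) x :=
    fun a => diff_dFc hE a a hx
  have h0 : fderiv ℝ (fun z : E4 => ∑ a, fderiv ℝ (fun w => HzV Ee w a) z (bas a)) x
      = fderiv ℝ (fun _ : E4 => (0:ℝ)) x := by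
    apply Filter.EventuallyEq.fderiv_eq
    filter_upwards [Ur_mem_nhds hx] with z hz
    exact dv_Ur hE hdiv z hz
  have h1 : fderiv ℝ (fun z : E4 => ∑ a, fderiv ℝ (fun w => HzV Ee w a) z (bas a)) x
      (bas i) = 0 := by rw [h0]; simp
  rw [fderiv_sum_apply4 hdA] at h1
  have h2 : ∀ a : Fin 4, fderiv ℝ
        (fun z : E4 => fderiv ℝ (fun w => HzV Ee w a) z (bas a)) x (bas i)
      = fderiv ℝ (fderiv ℝ (fun z => HzV Ee z a)) x (bas i) (bas a) :=
    fun a => fderiv_dFc hE a a hx (bas i)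
  rw [Finset.sum_congr rfl (fun a _ => h2 a)] at h1
  exact h1

/-- rewriting curlH in convenient bracketing -/
lemma curlH_expand (W : E4 → E4) (y : E4) (a : Fin 4) :
    curlH W y a = sg a * ∑ d, (y d *
      ∑ b, ∑ c, ep d a b c * (sg b * fderiv ℝ (fun z => HzV W z c) y (bas b))) := by
  unfold curlH
  congr 1
  refine Finset.sum_congr rfl fun d _ => ?_
  rw [Finset.mul_sum]
  refine Finset.sum_congr rfl fun b _ => ?_
  rw [Finset.mul_sum]
  refine Finset.sum_congr rfl fun c _ => ?_
  ring

include hE hB in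
/-- curl E = -n B extended to Ur -/
lemma curlE_Ur (n : ℤ) (h2 : ∀ x ∈ Hb, ∀ a, -curlH Ee x a = (n : ℝ) * Bb x a) :
    ∀ y ∈ Ur, ∀ a, sg a * ∑ d, (y d *
      ∑ b, ∑ c, ep d a b c * (sg b * fderiv ℝ (fun z => HzV Ee z c) y (bas b)))
      = -(n : ℝ) * HzV Bb y a := by
  intro y hy a
  have hc : 0 < (Real.sqrt (mk4 y y))⁻¹ := inv_pos.2 (sqrt_mk4_pos hy)
  have hcy : (Real.sqrt (mk4 y y))⁻¹ • y = ret y := rfl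
  have hsq : Real.sqrt (mk4 y y) * (Real.sqrt (mk4 y y))⁻¹ = 1 :=
    mul_inv_cancel₀ (sqrt_mk4_pos hy).ne'
  have hypt : ∀ d : Fin 4, y d = Real.sqrt (mk4 y y) * (ret y) d := by
    intro d
    conv_lhs => rw [self_eq_sqrt_smul_ret hy]
    rfl
  have hsc : ∀ b c : Fin 4, fderiv ℝ (fun z => HzV Ee z c) y (bas b)
      = (Real.sqrt (mk4 y y))⁻¹ * fderiv ℝ (fun z => HzV Ee z c) (ret y) (bas b) := by
    intro b c
    rw [← hcy]
    exact fderiv_Fc_scale hE c hc hy (bas b)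
  have hstep : sg a * ∑ d, (y d *
      ∑ b, ∑ c, ep d a b c * (sg b * fderiv ℝ (fun z => HzV Ee z c) y (bas b)))
      = curlH Ee (ret y) a := by
    rw [curlH_expand]
    congr 1
    refine Finset.sum_congr rfl fun d _ => ?_
    rw [hypt d]
    rw [show ∑ b, ∑ c, ep d a b c * (sg b * fderiv ℝ (fun z => HzV Ee z c) y (bas b))
        = (Real.sqrt (mk4 y y))⁻¹ * ∑ b, ∑ c, ep d a b c
          * (sg b * fderiv ℝ (fun z => HzV Ee z c) (ret y) (bas b)) from ?_]
    · rw [mul_mul_mul_comm, hsq, one_mul]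
    · rw [Finset.mul_sum]
      refine Finset.sum_congr rfl fun b _ => ?_
      rw [Finset.mul_sum]
      refine Finset.sum_congr rfl fun c _ => ?_
      rw [hsc b c]
      ring
  rw [hstep]
  have := h2 (ret y) (ret_mem_Hb hy) a
  have h3 : curlH Ee (ret y) a = -((n:ℝ) * Bb (ret y) a) := by linarith
  rw [h3]
  have : HzV Bb y a = Bb (ret y) a := rfl
  rw [this]
  ring

end pointeqs2

section pointeqs3
variable {Ee Bb : E4 → E4} (hE : ContDiffOn ℝ (⊤ : ℕ∞) Ee Ur) (hB : ContDiffOn ℝ (⊤ : ℕ∞) Bb Ur)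

include hE hB in
/-- derivative of the curl equation at a point -/
lemma cF1_pt (n : ℤ) (h2 : ∀ x ∈ Hb, ∀ a, -curlH Ee x a = (n : ℝ) * Bb x a)
    {x : E4} (hx : x ∈ Ur) (i a : Fin 4) :
    sg a * ∑ d, ((bas i) d *
        (∑ b, ∑ c, ep d a b c * (sg b * fderiv ℝ (fun z => HzV Ee z c) x (bas b)))
      + x d *
        (∑ b, ∑ c, ep d a b c
          * (sg b * fderiv ℝ (fderiv ℝ (fun z => HzV Ee z c)) x (bas i) (bas b))))
      = -(n : ℝ) * fderiv ℝ (fun z => HzV Bb z a) x (bas i) := by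
  have hdg : ∀ d : Fin 4, DifferentiableAt ℝ (fun z : E4 =>
      ∑ b, ∑ c, ep d a b c * (sg b * fderiv ℝ (fun w => HzV Ee w c) z (bas b))) x := by
    intro d
    apply DifferentiableAt.fun_sum; intro b _
    apply DifferentiableAt.fun_sum; intro c _
    exact ((diff_dFc hE c b hx).const_mul _).const_mul _
  have hdA : ∀ d : Fin 4, DifferentiableAt ℝ (fun z : E4 => z d *
      ∑ b, ∑ c, ep d a b c * (sg b * fderiv ℝ (fun w => HzV Ee w c) z (bas b))) x :=
    fun d => (diff_coord d x).mul (hdg d)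
  have hdL : DifferentiableAt ℝ (fun z : E4 => ∑ d, (z d *
      ∑ b, ∑ c, ep d a b c * (sg b * fderiv ℝ (fun w => HzV Ee w c) z (bas b)))) x := by
    apply DifferentiableAt.fun_sum; intro d _; exact hdA d
  have h0 : fderiv ℝ (fun z : E4 => sg a * ∑ d, (z d *
        ∑ b, ∑ c, ep d a b c * (sg b * fderiv ℝ (fun w => HzV Ee w c) z (bas b)))) x
      = fderiv ℝ (fun z : E4 => -(n : ℝ) * HzV Bb z a) x := by
    apply Filter.EventuallyEq.fderiv_eq
    filter_upwards [Ur_mem_nhds hx] with z hz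
    exact curlE_Ur hE hB n h2 z hz a
  have h1 : fderiv ℝ (fun z : E4 => sg a * ∑ d, (z d *
        ∑ b, ∑ c, ep d a b c * (sg b * fderiv ℝ (fun w => HzV Ee w c) z (bas b)))) x (bas i)
      = -(n : ℝ) * fderiv ℝ (fun z => HzV Bb z a) x (bas i) := by
    rw [h0, fderiv_const_mul_apply (diff_Fc hB a hx)]
  rw [fderiv_const_mul_apply hdL, fderiv_sum_apply4 hdA] at h1
  have h2' : ∀ d : Fin 4, fderiv ℝ (fun z : E4 => z d *
        ∑ b, ∑ c, ep d a b c * (sg b * fderiv ℝ (fun w => HzV Ee w c) z (bas b))) x (bas i)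
      = (bas i) d *
        (∑ b, ∑ c, ep d a b c * (sg b * fderiv ℝ (fun z => HzV Ee z c) x (bas b)))
      + x d *
        (∑ b, ∑ c, ep d a b c
          * (sg b * fderiv ℝ (fderiv ℝ (fun z => HzV Ee z c)) x (bas i) (bas b))) := by
    intro d
    rw [fderiv_coord_mul_apply (hdg d)]
    congr 1
    congr 1
    rw [fderiv_sum_apply4 (fun b => by
      apply DifferentiableAt.fun_sum; intro c _
      exact ((diff_dFc hE c b hx).const_mul _).const_mul _)]
    refine Finset.sum_congr rfl fun b _ => ?_
    rw [fderiv_sum_apply4 (fun c => ((diff_dFc hE c b hx).const_mul _).const_mul _)]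
    refine Finset.sum_congr rfl fun c _ => ?_
    rw [fderiv_const_mul_apply ((diff_dFc hE c b hx).const_mul _),
      fderiv_const_mul_apply (diff_dFc hE c b hx), fderiv_dFc hE c b hx]
  rw [Finset.sum_congr rfl (fun d _ => h2' d)] at h1
  linear_combination h1
end pointeqs3

section reduction
variable {Ee : E4 → E4} (hE : ContDiffOn ℝ (⊤ : ℕ∞) Ee Ur)
    (htE : ∀ x ∈ Hb, Tang x (Ee x))

include htE in
lemma contract_alpha (k : E4) {z : E4} (hz : z ∈ Hb) :
    ∑ a, Ee z a * pd (Hz (trfn k)) a z = ∑ a, (sg a * k a) * Ee z a := by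
  have ht : mk4 z (Ee z) = 0 := htE z hz
  rw [mk4_expand] at ht
  rw [Finset.sum_congr rfl (fun a _ => by rw [pd_Hz_trfn hz k a] : ∀ a ∈ Finset.univ,
    Ee z a * pd (Hz (trfn k)) a z = Ee z a * (sg a * k a - mk4 k z * (sg a * z a)))]
  simp only [Fin.sum_univ_four, sg0, sg1, sg2, sg3]
  linear_combination (-(mk4 k z)) * ht

include htE in
lemma Hzphi_Ur (k : E4) : ∀ y ∈ Ur,
    Hz (fun w => ∑ a, Ee w a * pd (Hz (trfn k)) a w) y
      = ∑ a, (sg a * k a) * HzV Ee y a := by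
  intro y hy
  show (∑ a, Ee (ret y) a * pd (Hz (trfn k)) a (ret y)) = _
  rw [contract_alpha htE k (ret_mem_Hb hy)]
  rfl

include hE htE in
lemma pd_Hzphi_Ur (k : E4) (i : Fin 4) : ∀ y ∈ Ur,
    pd (Hz (fun w => ∑ a, Ee w a * pd (Hz (trfn k)) a w)) i y
      = ∑ a, (sg a * k a) * fderiv ℝ (fun z => HzV Ee z a) y (bas i) := by
  intro y hy
  rw [pd]
  have heq : Hz (fun w => ∑ a, Ee w a * pd (Hz (trfn k)) a w) =ᶠ[nhds y]
      (fun w => ∑ a, (sg a * k a) * HzV Ee w a) := by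
    filter_upwards [Ur_mem_nhds hy] with z hz
    exact Hzphi_Ur htE k z hz
  rw [heq.fderiv_eq, fderiv_sum_apply4 (fun a => (diff_Fc hE a hy).const_mul _)]
  exact Finset.sum_congr rfl fun a _ => fderiv_const_mul_apply (diff_Fc hE a hy) _

include hE htE in
lemma D2H_phi (k : E4) {x : E4} (hx : x ∈ Hb) :
    D2H (fun w => ∑ a, Ee w a * pd (Hz (trfn k)) a w) x
      = ∑ i, sg i * ∑ a, (sg a * k a)
          * fderiv ℝ (fderiv ℝ (fun z => HzV Ee z a)) x (bas i) (bas i) := by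
  have hxU : x ∈ Ur := Hb_subset_Ur hx
  rw [D2H, boxm]
  refine Finset.sum_congr rfl fun i _ => ?_
  congr 1
  rw [pd]
  have heq : pd (Hz (fun w => ∑ a, Ee w a * pd (Hz (trfn k)) a w)) i =ᶠ[nhds x]
      (fun y => ∑ a, (sg a * k a) * fderiv ℝ (fun z => HzV Ee z a) y (bas i)) := by
    filter_upwards [Ur_mem_nhds hxU] with z hz
    exact pd_Hzphi_Ur hE htE k i z hz
  rw [heq.fderiv_eq, fderiv_sum_apply4 (fun a => (diff_dFc hE a i hxU).const_mul _)]
  refine Finset.sum_congr rfl fun a _ => ?_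
  rw [fderiv_const_mul_apply (diff_dFc hE a i hxU), fderiv_dFc hE a i hxU]

end reduction


set_option maxHeartbeats 4000000 in
theorem stmt14 (n : ℤ) (Ee Bb : E4 → E4)
    (hE : ContDiffOn ℝ (⊤ : ℕ∞) Ee Ur) (hB : ContDiffOn ℝ (⊤ : ℕ∞) Bb Ur)
    (htE : ∀ x ∈ Hb, Tang x (Ee x)) (htB : ∀ x ∈ Hb, Tang x (Bb x))
    (h1 : ∀ x ∈ Hb, ∀ a, curlH Bb x a = (n : ℝ) * Ee x a)
    (h2 : ∀ x ∈ Hb, ∀ a, -curlH Ee x a = (n : ℝ) * Bb x a)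
    (hdiv : ∀ x ∈ Hb, divH Ee x = 0)
    (k : E4) :
    ∀ x ∈ Hb,
      D2H (fun y => ∑ a, Ee y a * pd (Hz (trfn k)) a y) x
        = (1 - (n : ℝ)^2) * ∑ a, Ee x a * pd (Hz (trfn k)) a x := by
  intro x hx
  have hxU : x ∈ Ur := Hb_subset_Ur hx
  have hHzE : HzV Ee x = Ee x := by unfold HzV; rw [ret_eq_self hx]
  have hHzB : HzV Bb x = Bb x := by unfold HzV; rw [ret_eq_self hx]
  have ecF101 := cF1_pt hE hB n h2 hxU 0 1
  simp [Fin.sum_univ_four, hHzE, hHzB] at ecF101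
  have ecF102 := cF1_pt hE hB n h2 hxU 0 2
  simp [Fin.sum_univ_four, hHzE, hHzB] at ecF102
  have ecF103 := cF1_pt hE hB n h2 hxU 0 3
  simp [Fin.sum_univ_four, hHzE, hHzB] at ecF103
  have ecF110 := cF1_pt hE hB n h2 hxU 1 0
  simp [Fin.sum_univ_four, hHzE, hHzB] at ecF110
  have ecF112 := cF1_pt hE hB n h2 hxU 1 2
  simp [Fin.sum_univ_four, hHzE, hHzB] at ecF112
  have ecF113 := cF1_pt hE hB n h2 hxU 1 3
  simp [Fin.sum_univ_four, hHzE, hHzB] at ecF113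
  have ecF120 := cF1_pt hE hB n h2 hxU 2 0
  simp [Fin.sum_univ_four, hHzE, hHzB] at ecF120
  have ecF121 := cF1_pt hE hB n h2 hxU 2 1
  simp [Fin.sum_univ_four, hHzE, hHzB] at ecF121
  have ecF123 := cF1_pt hE hB n h2 hxU 2 3
  simp [Fin.sum_univ_four, hHzE, hHzB] at ecF123
  have ecF130 := cF1_pt hE hB n h2 hxU 3 0
  simp [Fin.sum_univ_four, hHzE, hHzB] at ecF130
  have ecF131 := cF1_pt hE hB n h2 hxU 3 1
  simp [Fin.sum_univ_four, hHzE, hHzB] at ecF131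
  have ecF132 := cF1_pt hE hB n h2 hxU 3 2
  simp [Fin.sum_univ_four, hHzE, hHzB] at ecF132
  have ecG0 : curlH Bb x 0 = (n:ℝ) * Ee x 0 := h1 x hx 0
  rw [curlH_expand] at ecG0
  simp [Fin.sum_univ_four, hHzE, hHzB] at ecG0
  have ecG1 : curlH Bb x 1 = (n:ℝ) * Ee x 1 := h1 x hx 1
  rw [curlH_expand] at ecG1
  simp [Fin.sum_univ_four, hHzE, hHzB] at ecG1
  have ecG2 : curlH Bb x 2 = (n:ℝ) * Ee x 2 := h1 x hx 2
  rw [curlH_expand] at ecG2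
  simp [Fin.sum_univ_four, hHzE, hHzB] at ecG2
  have ecG3 : curlH Bb x 3 = (n:ℝ) * Ee x 3 := h1 x hx 3
  rw [curlH_expand] at ecG3
  simp [Fin.sum_univ_four, hHzE, hHzB] at ecG3
  have edvF := dv_Ur hE hdiv x hxU
  simp [Fin.sum_univ_four, hHzE, hHzB] at edvF
  have edvF10 := dv1_pt hE hdiv hxU 0
  simp [Fin.sum_univ_four, hHzE, hHzB] at edvF10
  have edvF11 := dv1_pt hE hdiv hxU 1
  simp [Fin.sum_univ_four, hHzE, hHzB] at edvF11
  have edvF12 := dv1_pt hE hdiv hxU 2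
  simp [Fin.sum_univ_four, hHzE, hHzB] at edvF12
  have edvF13 := dv1_pt hE hdiv hxU 3
  simp [Fin.sum_univ_four, hHzE, hHzB] at edvF13
  have ehF100 := hF1_pt hE hxU 0 0
  simp [Fin.sum_univ_four, hHzE, hHzB] at ehF100
  have ehF101 := hF1_pt hE hxU 0 1
  simp [Fin.sum_univ_four, hHzE, hHzB] at ehF101
  have ehF102 := hF1_pt hE hxU 0 2
  simp [Fin.sum_univ_four, hHzE, hHzB] at ehF102
  have ehF103 := hF1_pt hE hxU 0 3
  simp [Fin.sum_univ_four, hHzE, hHzB] at ehF103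
  have ehF110 := hF1_pt hE hxU 1 0
  simp [Fin.sum_univ_four, hHzE, hHzB] at ehF110
  have ehF111 := hF1_pt hE hxU 1 1
  simp [Fin.sum_univ_four, hHzE, hHzB] at ehF111
  have ehF112 := hF1_pt hE hxU 1 2
  simp [Fin.sum_univ_four, hHzE, hHzB] at ehF112
  have ehF113 := hF1_pt hE hxU 1 3
  simp [Fin.sum_univ_four, hHzE, hHzB] at ehF113
  have ehF120 := hF1_pt hE hxU 2 0
  simp [Fin.sum_univ_four, hHzE, hHzB] at ehF120
  have ehF121 := hF1_pt hE hxU 2 1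
  simp [Fin.sum_univ_four, hHzE, hHzB] at ehF121
  have ehF122 := hF1_pt hE hxU 2 2
  simp [Fin.sum_univ_four, hHzE, hHzB] at ehF122
  have ehF123 := hF1_pt hE hxU 2 3
  simp [Fin.sum_univ_four, hHzE, hHzB] at ehF123
  have ehF130 := hF1_pt hE hxU 3 0
  simp [Fin.sum_univ_four, hHzE, hHzB] at ehF130
  have ehF131 := hF1_pt hE hxU 3 1
  simp [Fin.sum_univ_four, hHzE, hHzB] at ehF131
  have ehF132 := hF1_pt hE hxU 3 2
  simp [Fin.sum_univ_four, hHzE, hHzB] at ehF132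
  have ehF133 := hF1_pt hE hxU 3 3
  simp [Fin.sum_univ_four, hHzE, hHzB] at ehF133
  have ehF0 := hF_Ur hE 0 x hxU
  simp [Fin.sum_univ_four, hHzE, hHzB] at ehF0
  have ehF1 := hF_Ur hE 1 x hxU
  simp [Fin.sum_univ_four, hHzE, hHzB] at ehF1
  have ehF2 := hF_Ur hE 2 x hxU
  simp [Fin.sum_univ_four, hHzE, hHzB] at ehF2
  have ehF3 := hF_Ur hE 3 x hxU
  simp [Fin.sum_univ_four, hHzE, hHzB] at ehF3
  have es1 : x 0 * x 0 + x 1 * x 1 + x 2 * x 2 - x 3 * x 3 = 1 := by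
    have h := hx; rw [Hb, Set.mem_setOf_eq, mk4_expand] at h; linarith
  have esym010 := ddF_symm hE 0 hxU (bas 0) (bas 1)
  have esym011 := ddF_symm hE 1 hxU (bas 0) (bas 1)
  have esym012 := ddF_symm hE 2 hxU (bas 0) (bas 1)
  have esym013 := ddF_symm hE 3 hxU (bas 0) (bas 1)
  have esym020 := ddF_symm hE 0 hxU (bas 0) (bas 2)
  have esym021 := ddF_symm hE 1 hxU (bas 0) (bas 2)
  have esym022 := ddF_symm hE 2 hxU (bas 0) (bas 2)
  have esym023 := ddF_symm hE 3 hxU (bas 0) (bas 2)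
  have esym030 := ddF_symm hE 0 hxU (bas 0) (bas 3)
  have esym031 := ddF_symm hE 1 hxU (bas 0) (bas 3)
  have esym032 := ddF_symm hE 2 hxU (bas 0) (bas 3)
  have esym033 := ddF_symm hE 3 hxU (bas 0) (bas 3)
  have esym120 := ddF_symm hE 0 hxU (bas 1) (bas 2)
  have esym121 := ddF_symm hE 1 hxU (bas 1) (bas 2)
  have esym122 := ddF_symm hE 2 hxU (bas 1) (bas 2)
  have esym123 := ddF_symm hE 3 hxU (bas 1) (bas 2)
  have esym130 := ddF_symm hE 0 hxU (bas 1) (bas 3)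
  have esym131 := ddF_symm hE 1 hxU (bas 1) (bas 3)
  have esym132 := ddF_symm hE 2 hxU (bas 1) (bas 3)
  have esym133 := ddF_symm hE 3 hxU (bas 1) (bas 3)
  have esym230 := ddF_symm hE 0 hxU (bas 2) (bas 3)
  have esym231 := ddF_symm hE 1 hxU (bas 2) (bas 3)
  have esym232 := ddF_symm hE 2 hxU (bas 2) (bas 3)
  have esym233 := ddF_symm hE 3 hxU (bas 2) (bas 3)
  have etF10 := tF1_Ur hE htE 0 x hxU
  simp [Fin.sum_univ_four, hHzE, hHzB] at etF10
  have etF11 := tF1_Ur hE htE 1 x hxU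
  simp [Fin.sum_univ_four, hHzE, hHzB] at etF11
  have etF12 := tF1_Ur hE htE 2 x hxU
  simp [Fin.sum_univ_four, hHzE, hHzB] at etF12
  have etF13 := tF1_Ur hE htE 3 x hxU
  simp [Fin.sum_univ_four, hHzE, hHzB] at etF13
  have etF200 := tF2_pt hE htE hxU 0 0
  simp [Fin.sum_univ_four, hHzE, hHzB] at etF200
  have etF201 := tF2_pt hE htE hxU 0 1
  simp [Fin.sum_univ_four, hHzE, hHzB] at etF201
  have etF202 := tF2_pt hE htE hxU 0 2
  simp [Fin.sum_univ_four, hHzE, hHzB] at etF202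
  have etF203 := tF2_pt hE htE hxU 0 3
  simp [Fin.sum_univ_four, hHzE, hHzB] at etF203
  have etF211 := tF2_pt hE htE hxU 1 1
  simp [Fin.sum_univ_four, hHzE, hHzB] at etF211
  have etF212 := tF2_pt hE htE hxU 1 2
  simp [Fin.sum_univ_four, hHzE, hHzB] at etF212
  have etF213 := tF2_pt hE htE hxU 1 3
  simp [Fin.sum_univ_four, hHzE, hHzB] at etF213
  have etF222 := tF2_pt hE htE hxU 2 2
  simp [Fin.sum_univ_four, hHzE, hHzB] at etF222
  have etF223 := tF2_pt hE htE hxU 2 3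
  simp [Fin.sum_univ_four, hHzE, hHzB] at etF223
  have etF233 := tF2_pt hE htE hxU 3 3
  simp [Fin.sum_univ_four, hHzE, hHzB] at etF233
  have key0 : fderiv ℝ (fderiv ℝ (fun z => HzV Ee z 0)) x (bas 0) (bas 0) + fderiv ℝ (fderiv ℝ (fun z => HzV Ee z 0)) x (bas 1) (bas 1) + fderiv ℝ (fderiv ℝ (fun z => HzV Ee z 0)) x (bas 2) (bas 2) - fderiv ℝ (fderiv ℝ (fun z => HzV Ee z 0)) x (bas 3) (bas 3) = (1 - (n:ℝ)^2) * Ee x 0 := by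
    linear_combination ((-1 : ℝ)*(x 3)) * ecF112 + ((1 : ℝ)*(x 2)) * ecF113 + ((1 : ℝ)*(x 3)) * ecF121 + ((-1 : ℝ)*(x 1)) * ecF123 + ((1 : ℝ)*(x 2)) * ecF131 + ((-1 : ℝ)*(x 1)) * ecF132 + ((-1 : ℝ)*((n:ℝ))) * ecG0 + ((-1 : ℝ)) * etF10 + ((-1 : ℝ)*(x 1)) * etF201 + ((-1 : ℝ)*(x 2)) * etF202 + ((-1 : ℝ)*(x 3)) * etF203 + ((1 : ℝ)*(x 0)) * etF211 + ((1 : ℝ)*(x 0)) * etF222 + ((-1 : ℝ)*(x 0)) * etF233 + ((2 : ℝ)) * ehF0 + ((1 : ℝ)*(x 1)) * ehF110 + ((-1 : ℝ)*(x 0)) * ehF111 + ((1 : ℝ)*(x 2)) * ehF120 + ((-1 : ℝ)*(x 0)) * ehF122 + ((1 : ℝ)*(x 3)) * ehF130 + ((-1 : ℝ)*(x 0)) * ehF133 + ((-1 : ℝ)*(x 0)) * edvF + ((1 : ℝ)) * edvF10 + ((1 : ℝ)*(fderiv ℝ (fderiv ℝ (fun z => HzV Ee z 1)) x (bas 0)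 (bas 1))) * es1 + ((1 : ℝ)*(fderiv ℝ (fderiv ℝ (fun z => HzV Ee z 2)) x (bas 0) (bas 2))) * es1 + ((1 : ℝ)*(fderiv ℝ (fderiv ℝ (fun z => HzV Ee z 3)) x (bas 0) (bas 3))) * es1 + ((-1 : ℝ)*(fderiv ℝ (fderiv ℝ (fun z => HzV Ee z 0)) x (bas 1) (bas 1))) * es1 + ((-1 : ℝ)*(fderiv ℝ (fderiv ℝ (fun z => HzV Ee z 0)) x (bas 2) (bas 2))) * es1 + ((1 : ℝ)*(fderiv ℝ (fderiv ℝ (fun z => HzV Ee z 0)) x (bas 3) (bas 3))) * es1 + ((1 : ℝ)*(x 0)*(x 1)) * esym010 + ((1 : ℝ)*(x 1)*(x 2)) * esym012 + ((-1 : ℝ)*(x 1)*(x 3)) * esym013 + ((1 : ℝ)*(x 0)*(x 2)) * esym020 + ((1 : ℝ)*(x 1)*(x 2)) * esym021 + ((-1 : ℝ)*(x 2)*(x 3)) * esym023 + ((1 : ℝ)*(x 0)*(x 3)) * esym030 + ((1 : ℝ)*(x 1)*(x 3)) * esym031 + ((1 : ℝ)*(x 2)*(x 3)) * esym032 + ((-1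 : ℝ)*(x 0)*(x 0) + (-1 : ℝ)*(x 2)*(x 2) + (1 : ℝ)*(x 3)*(x 3)) * esym011 + ((-1 : ℝ)*(x 0)*(x 0) + (-1 : ℝ)*(x 1)*(x 1) + (1 : ℝ)*(x 3)*(x 3)) * esym022 + ((-1 : ℝ)*(x 0)*(x 0) + (-1 : ℝ)*(x 1)*(x 1) + (-1 : ℝ)*(x 2)*(x 2)) * esym033
  have key1 : fderiv ℝ (fderiv ℝ (fun z => HzV Ee z 1)) x (bas 0) (bas 0) + fderiv ℝ (fderiv ℝ (fun z => HzV Ee z 1)) x (bas 1) (bas 1) + fderiv ℝ (fderiv ℝ (fun z => HzV Ee z 1)) x (bas 2) (bas 2) - fderiv ℝ (fderiv ℝ (fun z => HzV Ee z 1)) x (bas 3) (bas 3) = (1 - (n:ℝ)^2) * Ee x 1 := by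
    linear_combination ((1 : ℝ)*(x 3)) * ecF102 + ((-1 : ℝ)*(x 2)) * ecF103 + ((-1 : ℝ)*(x 3)) * ecF120 + ((1 : ℝ)*(x 0)) * ecF123 + ((-1 : ℝ)*(x 2)) * ecF130 + ((1 : ℝ)*(x 0)) * ecF132 + ((-1 : ℝ)*((n:ℝ))) * ecG1 + ((-1 : ℝ)) * etF11 + ((1 : ℝ)*(x 1)) * etF200 + ((-1 : ℝ)*(x 0)) * etF201 + ((-1 : ℝ)*(x 2)) * etF212 + ((-1 : ℝ)*(x 3)) * etF213 + ((1 : ℝ)*(x 1)) * etF222 + ((-1 : ℝ)*(x 1)) * etF233 + ((2 : ℝ)) * ehF1 + ((-1 : ℝ)*(x 1)) * ehF100 + ((1 : ℝ)*(x 0)) * ehF101 + ((1 : ℝ)*(x 2)) * ehF121 + ((-1 : ℝ)*(x 1)) * ehF122 + ((1 : ℝ)*(x 3)) * ehF131 + ((-1 : ℝ)*(x 1)) * ehF133 + ((-1 : ℝ)*(x 1)) * edvF + ((1 : ℝ)) * edvF11 + ((-1 : ℝ)*(fderiv ℝ (fderiv ℝ (fun z => HzV Ee z 1)) x (bas 0)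 (bas 0))) * es1 + ((1 : ℝ)*(fderiv ℝ (fderiv ℝ (fun z => HzV Ee z 0)) x (bas 0) (bas 1))) * es1 + ((1 : ℝ)*(fderiv ℝ (fderiv ℝ (fun z => HzV Ee z 2)) x (bas 1) (bas 2))) * es1 + ((1 : ℝ)*(fderiv ℝ (fderiv ℝ (fun z => HzV Ee z 3)) x (bas 1) (bas 3))) * es1 + ((-1 : ℝ)*(fderiv ℝ (fderiv ℝ (fun z => HzV Ee z 1)) x (bas 2) (bas 2))) * es1 + ((1 : ℝ)*(fderiv ℝ (fderiv ℝ (fun z => HzV Ee z 1)) x (bas 3) (bas 3))) * es1 + ((1 : ℝ)*(x 0)*(x 2)) * esym120 + ((1 : ℝ)*(x 1)*(x 2)) * esym121 + ((-1 : ℝ)*(x 2)*(x 3)) * esym123 + ((1 : ℝ)*(x 0)*(x 3)) * esym130 + ((1 : ℝ)*(x 1)*(x 3)) * esym131 + ((1 : ℝ)*(x 2)*(x 3)) * esym132 + ((1 : ℝ)) * esym010 + ((-1 : ℝ)*(x 0)*(x 0) + (-1 : ℝ)*(x 1)*(x 1) + (1 : ℝ)*(x 3)*(x 3)) * esym122 +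 ((-1 : ℝ)*(x 0)*(x 0) + (-1 : ℝ)*(x 1)*(x 1) + (-1 : ℝ)*(x 2)*(x 2)) * esym133
  have key2 : fderiv ℝ (fderiv ℝ (fun z => HzV Ee z 2)) x (bas 0) (bas 0) + fderiv ℝ (fderiv ℝ (fun z => HzV Ee z 2)) x (bas 1) (bas 1) + fderiv ℝ (fderiv ℝ (fun z => HzV Ee z 2)) x (bas 2) (bas 2) - fderiv ℝ (fderiv ℝ (fun z => HzV Ee z 2)) x (bas 3) (bas 3) = (1 - (n:ℝ)^2) * Ee x 2 := by
    linear_combination ((-1 : ℝ)*(x 3)) * ecF101 + ((1 : ℝ)*(x 1)) * ecF103 + ((1 : ℝ)*(x 3)) * ecF110 + ((-1 : ℝ)*(x 0)) * ecF113 + ((1 : ℝ)*(x 1)) * ecF130 + ((-1 : ℝ)*(x 0)) * ecF131 + ((-1 : ℝ)*((n:ℝ))) * ecG2 + ((-1 : ℝ)) * etF12 + ((1 : ℝ)*(x 2)) * etF200 + ((-1 : ℝ)*(x 0)) * etF202 + ((1 : ℝ)*(x 2)) * etF211 + ((-1 : ℝ)*(x 1)) * etF212 + ((-1 : ℝ)*(x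 3)) * etF223 + ((-1 : ℝ)*(x 2)) * etF233 + ((2 : ℝ)) * ehF2 + ((-1 : ℝ)*(x 2)) * ehF100 + ((1 : ℝ)*(x 0)) * ehF102 + ((-1 : ℝ)*(x 2)) * ehF111 + ((1 : ℝ)*(x 1)) * ehF112 + ((1 : ℝ)*(x 3)) * ehF132 + ((-1 : ℝ)*(x 2)) * ehF133 + ((-1 : ℝ)*(x 2)) * edvF + ((1 : ℝ)) * edvF12 + ((-1 : ℝ)*(fderiv ℝ (fderiv ℝ (fun z => HzV Ee z 2)) x (bas 0) (bas 0))) * es1 + ((1 : ℝ)*(fderiv ℝ (fderiv ℝ (fun z => HzV Ee z 0)) x (bas 0) (bas 2))) * es1 + ((-1 : ℝ)*(fderiv ℝ (fderiv ℝ (fun z => HzV Ee z 2)) x (bas 1) (bas 1))) * es1 + ((1 : ℝ)*(fderiv ℝ (fderiv ℝ (fun z => HzV Ee z 1)) x (bas 1) (bas 2))) * es1 + ((1 : ℝ)*(fderiv ℝ (fderiv ℝ (fun z => HzV Ee z 3)) x (bas 2) (bas 3))) * es1 + ((1 : ℝ)*(fderiv ℝ (fderiv ℝ (fun z => HzV Ee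 z 2)) x (bas 3) (bas 3))) * es1 + ((1 : ℝ)*(x 0)*(x 3)) * esym230 + ((1 : ℝ)*(x 1)*(x 3)) * esym231 + ((1 : ℝ)*(x 2)*(x 3)) * esym232 + ((1 : ℝ)) * esym020 + ((1 : ℝ)) * esym121 + ((-1 : ℝ)*(x 0)*(x 0) + (-1 : ℝ)*(x 1)*(x 1) + (-1 : ℝ)*(x 2)*(x 2)) * esym233
  have key3 : fderiv ℝ (fderiv ℝ (fun z => HzV Ee z 3)) x (bas 0) (bas 0) + fderiv ℝ (fderiv ℝ (fun z => HzV Ee z 3)) x (bas 1) (bas 1) + fderiv ℝ (fderiv ℝ (fun z => HzV Ee z 3)) x (bas 2) (bas 2) - fderiv ℝ (fderiv ℝ (fun z => HzV Ee z 3)) x (bas 3) (bas 3) = (1 - (n:ℝ)^2) * Ee x 3 := by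
    linear_combination ((-1 : ℝ)*(x 2)) * ecF101 + ((1 : ℝ)*(x 1)) * ecF102 + ((1 : ℝ)*(x 2)) * ecF110 + ((-1 : ℝ)*(x 0)) * ecF112 + ((-1 : ℝ)*(x 1)) * ecF120 + ((1 : ℝ)*(x 0)) * ecF121 + ((-1 : ℝ)*((n:ℝ))) * ecG3 + ((1 : ℝ)) * etF13 + ((1 : ℝ)*(x 3)) * etF200 + ((1 : ℝ)*(x 0)) * etF203 + ((1 : ℝ)*(x 3)) * etF211 + ((1 : ℝ)*(x 1)) * etF213 + ((1 : ℝ)*(x 3)) * etF222 + ((1 : ℝ)*(x 2)) * etF223 + ((2 : ℝ)) * ehF3 + ((-1 : ℝ)*(x 3)) * ehF100 + ((1 : ℝ)*(x 0)) * ehF103 + ((-1 : ℝ)*(x 3)) * ehF111 + ((1 : ℝ)*(x 1)) * ehF113 + ((-1 : ℝ)*(x 3)) * ehF122 + ((1 : ℝ)*(x 2)) * ehF123 + ((-1 : ℝ)*(x 3)) * edvF + ((-1 : ℝ)) * edvF13 + ((-1 : ℝ)*(fderiv ℝ (fderiv ℝ (fun z => HzV Ee z 3)) x (bas 0) (bas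 0))) * es1 + ((-1 : ℝ)*(fderiv ℝ (fderiv ℝ (fun z => HzV Ee z 0)) x (bas 0) (bas 3))) * es1 + ((-1 : ℝ)*(fderiv ℝ (fderiv ℝ (fun z => HzV Ee z 3)) x (bas 1) (bas 1))) * es1 + ((-1 : ℝ)*(fderiv ℝ (fderiv ℝ (fun z => HzV Ee z 1)) x (bas 1) (bas 3))) * es1 + ((-1 : ℝ)*(fderiv ℝ (fderiv ℝ (fun z => HzV Ee z 3)) x (bas 2) (bas 2))) * es1 + ((-1 : ℝ)*(fderiv ℝ (fderiv ℝ (fun z => HzV Ee z 2)) x (bas 2) (bas 3))) * es1 + ((-1 : ℝ)) * esym030 + ((-1 : ℝ)) * esym131 + ((-1 : ℝ)) * esym232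
  have hL := D2H_phi hE htE k hx
  have hR := contract_alpha htE k hx
  rw [hL, hR]
  simp only [Fin.sum_univ_four, sg0, sg1, sg2, sg3]
  linear_combination (k 0) * key0 + (k 1) * key1 + (k 2) * key2 - (k 3) * key3
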